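/- arXiv:2009.07028 — 10 statements merged into one kernel-verified Lean document; each statement's English description precedes it below -/
import Mathlib

section
/- For every non-square integer D ≡ 0 or 1 (mod 4), there exists a prime q with Kronecker symbol (D/q) = -1; that is, the set P(D) = {q prime : (D/q) = -1} is nonempty. -/
open scoped NumberTheorySymbols

lemma aux_odd_factorization {m : ℕ} (hm : m ≠ 0) (hns : ¬ IsSquare m) :
    ∃ p : ℕ, p.Prime ∧ Odd (m.factorization p) := by
  obtain ⟨a, b, hab, ha⟩ := Nat.sq_mul_squarefree m
  have ha1 : a ≠ 1 := by
    rintro rfl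
    exact hns ⟨b, by rw [← hab]; ring⟩
  have ha0 : a ≠ 0 := ha.ne_zero
  obtain ⟨p, hp, hpa⟩ := Nat.exists_prime_and_dvd ha1
  have hb0 : b ≠ 0 := by rintro rfl; simp at hab; omega
  refine ⟨p, hp, ?_⟩
  have : m.factorization p = 2 * b.factorization p + a.factorization p := by
    rw [← hab, Nat.factorization_mul (by positivity) ha0, Nat.factorization_pow]
    simp [mul_comm]
  rw [this, Nat.factorization_eq_one_of_squarefree ha hp hpa]
  exact ⟨b.factorization p, by ring⟩

lemma aux_neg_sq (s : ℕ) (hs : s ≠ 0) :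
    ∃ n : ℕ, Odd n ∧ J((-(s^2 : ℤ)) | n) = -1 := by
  have h1 : 1 ≤ s^2 := Nat.one_le_iff_ne_zero.mpr (pow_ne_zero _ hs)
  set n : ℕ := 4 * s^2 - 1 with hn
  have hodd : Odd n := Nat.Even.sub_odd (by omega) ⟨2*s^2, by ring⟩ odd_one
  refine ⟨n, hodd, ?_⟩
  have heq : (-(s^2 : ℤ)) = -1 * (s:ℤ)^2 := by ring
  rw [heq, jacobiSym.mul_left, jacobiSym.at_neg_one hodd]
  have hcop : Nat.Coprime s n := by
    have hd1 := Nat.gcd_dvd_left s n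
    have hd2 := Nat.gcd_dvd_right s n
    have h4 : Nat.gcd s n ∣ 4 * s^2 := by
      have : Nat.gcd s n ∣ s^2 := hd1.trans (dvd_pow_self s (by norm_num))
      exact this.mul_left 4
    have hone : Nat.gcd s n ∣ 1 := by
      have := Nat.dvd_sub h4 hd2
      have heq1 : 4 * s^2 - n = 1 := by omega
      rwa [heq1] at this
    exact Nat.eq_one_of_dvd_one hone
  have hgcd : (s:ℤ).gcd (n:ℤ) = 1 := by simpa [Int.gcd_natCast_natCast] using hcop
  rw [jacobiSym.sq_one' hgcd]
  have hmod : n % 4 = 3 := by omega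
  rw [ZMod.χ₄_nat_three_mod_four hmod]
  ring

lemma aux_two (k : ℕ) (hk : Odd k) (u : ℤ) (hu : ¬ (2:ℤ) ∣ u) :
    ∃ n : ℕ, Odd n ∧ J(((2:ℤ)^k * u) | n) = -1 := by
  have hu0 : u ≠ 0 := by rintro rfl; exact hu (dvd_zero 2)
  have hua : u.natAbs ≠ 0 := Int.natAbs_ne_zero.mpr hu0
  have huodd : Odd u.natAbs := Int.natAbs_odd.mpr (Int.not_even_iff_odd.mp (fun h => hu h.two_dvd))
  set n : ℕ := 4 * u.natAbs + 1 with hn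
  have hodd : Odd n := ⟨2 * u.natAbs, by omega⟩
  refine ⟨n, hodd, ?_⟩
  rw [jacobiSym.mul_left, jacobiSym.pow_left]
  have h2 : J((2:ℤ) | n) = -1 := by
    rw [jacobiSym.at_two hodd]
    have hmod : n % 8 = 5 := by
      obtain ⟨m, hm⟩ := huodd
      omega
    rw [ZMod.χ₈_nat_mod_eight, hmod]
    decide
  have hu1 : J(u | n) = 1 := by
    rw [jacobiSym.mod_right u hodd]
    have h1 : 1 ≤ u.natAbs := Nat.one_le_iff_ne_zero.mpr hua
    have : n % (4 * u.natAbs) = 1 := by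
      rw [hn, Nat.add_mod_left]
      exact Nat.mod_eq_of_lt (by omega)
    rw [this, jacobiSym.one_right]
  rw [h2, hu1, hk.neg_one_pow]
  ring

lemma aux_odd_p (p : ℕ) (hp : p.Prime) (hp2 : p ≠ 2) (k : ℕ) (hk : Odd k)
    (u : ℤ) (hu0 : u ≠ 0) (hpu : ¬ (p:ℤ) ∣ u) :
    ∃ n : ℕ, Odd n ∧ J(((p:ℤ)^k * u) | n) = -1 := by
  haveI : Fact p.Prime := ⟨hp⟩
  have hchar : ringChar (ZMod p) ≠ 2 := by
    rw [ZMod.ringChar_zmod_n]; exact hp2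
  obtain ⟨b, hb⟩ := quadraticChar_exists_neg_one hchar
  have hua : u.natAbs ≠ 0 := Int.natAbs_ne_zero.mpr hu0
  have h1le : 1 ≤ u.natAbs := Nat.one_le_iff_ne_zero.mpr hua
  set M : ℕ := 4 * u.natAbs with hM
  have hco : Nat.Coprime M p := by
    rw [Nat.coprime_comm, hp.coprime_iff_not_dvd]
    intro hd
    rcases (Nat.Prime.dvd_mul hp).mp hd with h4 | hu
    · have : p ∣ 2 := hp.dvd_of_dvd_pow (n := 2) (by simpa [pow_two] using h4)
      exact hp2 ((Nat.prime_dvd_prime_iff_eq hp Nat.prime_two).mp this)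
    · exact hpu (Int.dvd_natAbs.mp (Int.natCast_dvd_natCast.mpr hu))
  obtain ⟨n, hn1, hnp⟩ := Nat.chineseRemainder hco 1 b.val
  have hnM : n % M = 1 := by
    have h := hn1
    rw [Nat.ModEq] at h
    rwa [Nat.mod_eq_of_lt (by omega : 1 < M)] at h
  have hn4 : n % 4 = 1 := by
    have h4M : (4:ℕ) ∣ M := ⟨u.natAbs, rfl⟩
    have h := Nat.ModEq.of_dvd h4M hn1
    rw [Nat.ModEq] at h
    rwa [Nat.mod_eq_of_lt (by norm_num : (1:ℕ) < 4)] at h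
  have hodd : Odd n := by
    rcases Nat.even_or_odd n with h | h
    · exfalso; obtain ⟨m, hm⟩ := h; omega
    · exact h
  refine ⟨n, hodd, ?_⟩
  rw [jacobiSym.mul_left, jacobiSym.pow_left]
  have hu1 : J(u | n) = 1 := by
    rw [jacobiSym.mod_right u hodd, ← hM, hnM, jacobiSym.one_right]
  have hpn : J((p:ℤ) | n) = -1 := by
    have hrec := jacobiSym.quadratic_reciprocity_one_mod_four' (hp.odd_of_ne_two hp2) hn4
    rw [hrec, ← jacobiSym.legendreSym.to_jacobiSym]
    have hcast : ((n : ℤ) : ZMod p) = b := by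
      have h1 : ((n : ℕ) : ZMod p) = ((b.val : ℕ) : ZMod p) :=
        (ZMod.natCast_eq_natCast_iff _ _ _).mpr hnp
      have h2 : ((b.val : ℕ) : ZMod p) = b := by rw [ZMod.natCast_val, ZMod.cast_id]
      push_cast
      rw [h1, h2]
    rw [legendreSym, hcast, hb]
  rw [hpn, hu1, hk.neg_one_pow]
  ring

lemma aux_key (D : ℤ) (hns : ¬ IsSquare D) :
    ∃ n : ℕ, Odd n ∧ J(D | n) = -1 := by
  have hD0 : D ≠ 0 := by rintro rfl; exact hns ⟨0, by ring⟩
  have hm0 : D.natAbs ≠ 0 := Int.natAbs_ne_zero.mpr hD0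
  by_cases hsq : IsSquare D.natAbs
  · obtain ⟨s, hs⟩ := hsq
    have hs0 : s ≠ 0 := by rintro rfl; simp [hs] at hm0
    have hDneg : D = -(s^2 : ℤ) := by
      rcases Int.natAbs_eq D with h | h
      · exfalso
        exact hns ⟨(s:ℤ), by rw [h, hs]; push_cast; ring⟩
      · rw [h, hs]; push_cast; ring
    rw [hDneg]
    exact aux_neg_sq s hs0
  · obtain ⟨p, hp, hk⟩ := aux_odd_factorization hm0 hsq
    set k := D.natAbs.factorization p with hkdef
    have hdvd : ((p:ℤ))^k ∣ D := by
      have h1 : p^k ∣ D.natAbs := Nat.ordProj_dvd _ _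
      have h2 : ((p^k : ℕ) : ℤ) ∣ (D.natAbs : ℤ) := Int.natCast_dvd_natCast.mpr h1
      push_cast at h2
      exact h2.trans ((abs_dvd D D).mpr dvd_rfl)
    set u := D / (p:ℤ)^k with hudef
    have hDu : D = (p:ℤ)^k * u := (Int.mul_ediv_cancel' hdvd).symm
    have hu0 : u ≠ 0 := by intro h; rw [h, mul_zero] at hDu; exact hD0 hDu
    have hpu : ¬ (p:ℤ) ∣ u := by
      intro h
      have hsucc : ((p:ℤ))^(k+1) ∣ D := by
        rw [hDu, pow_succ]
        exact mul_dvd_mul_left _ h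
      have : p^(k+1) ∣ D.natAbs := by
        rw [← Int.natAbs_natCast (p^(k+1))]
        exact Int.natAbs_dvd_natAbs.mpr (by push_cast; exact hsucc)
      exact Nat.pow_succ_factorization_not_dvd hm0 hp this
    rw [hDu]
    by_cases hp2 : p = 2
    · subst hp2
      exact aux_two k hk u (by exact_mod_cast hpu)
    · exact aux_odd_p p hp hp2 k hk u hu0 hpu


/-- Kronecker symbol `(D/q)` at a prime `q`, for discriminants `D ≡ 0,1 (mod 4)`. -/
def kron (D : ℤ) (q : ℕ) : ℤ :=
  if q = 2 then (if D % 8 = 1 then 1 else if D % 8 = 5 then -1 else 0)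
  else jacobiSym D q

theorem stmt0 (D : ℤ) (hD : D % 4 = 0 ∨ D % 4 = 1) (hns : ¬ IsSquare D) :
    ∃ q : ℕ, q.Prime ∧ kron D q = -1 := by
  obtain ⟨n, hodd, hJ⟩ := aux_key D hns
  obtain ⟨q, hq, hqn, hJq⟩ := jacobiSym.eq_neg_one_at_prime_divisor_of_eq_neg_one hJ
  have hq2 : q ≠ 2 := by
    rintro rfl
    rcases hodd with ⟨m, hm⟩
    obtain ⟨c, hc⟩ := hqn
    omega
  exact ⟨q, hq, by simp [kron, hq2, hJq]⟩
end

section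
/- Let D ≡ 0 or 1 (mod 4) be a non-square integer with d = |D|, and let s₁, s₂ be positive integers with gcd(d·s₁, s₂) = 1. If the number Ω⁻(s₂) of prime divisors q of s₂ (with multiplicity) satisfying (D/q) = -1 is odd and s₂ > d·s₁, then the positive integer M = s₂ - d·s₁ has a prime divisor q with (D/q) = -1 and gcd(q, s₁·s₂) = 1; in particular q ≤ M. -/
/-- `Ω_D⁻(n)`: number of prime divisors of `n`, with multiplicity, lying in `P(D)`. -/
def OmegaMinus (D : ℤ) (n : ℕ) : ℕ :=
  ((n.primeFactorsList).filter (fun q => kron D q = -1)).length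

open ZMod

lemma prod_eq_neg_one_pow (l : List ℤ) (h : ∀ x ∈ l, x = 1 ∨ x = -1) :
    l.prod = (-1) ^ (l.filter (fun x => x = -1)).length := by
  induction l with
  | nil => simp
  | cons a t ih =>
    have ha := h a (by simp)
    have ih' := ih (fun x hx => h x (by simp [hx]))
    rcases ha with rfl | rfl <;>
      simp [List.filter_cons, ih', pow_succ, mul_comm]

/-- reciprocity flip for odd naturals, with `χ₄` correction. -/
lemma flip_jacobi {k n : ℕ} (hk : Odd k) (hn : Odd n) :
    (jacobiSym k n) = (if k % 4 = 3 then (χ₄ n : ℤ) else 1) * jacobiSym n k := by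
  have hk2 := Nat.odd_iff.mp hk
  have hn2 := Nat.odd_iff.mp hn
  have hk4 : k % 4 = 1 ∨ k % 4 = 3 := by omega
  have hn4 : n % 4 = 1 ∨ n % 4 = 3 := by omega
  rcases hk4 with hk4 | hk4
  · rw [jacobiSym.quadratic_reciprocity_one_mod_four hk4 hn, if_neg (by omega), one_mul]
  · rcases hn4 with hn4 | hn4
    · rw [jacobiSym.quadratic_reciprocity_one_mod_four' hk hn4, if_pos hk4,
        χ₄_nat_one_mod_four hn4, one_mul]
    · rw [jacobiSym.quadratic_reciprocity_three_mod_four hk4 hn4, if_pos hk4,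
        χ₄_nat_three_mod_four hn4, neg_one_mul]

lemma jacobi_odd_num {m : ℤ} (hm : Odd m) {n : ℕ} (hn : Odd n) :
    jacobiSym m n = (if m % 4 = 3 then (χ₄ n : ℤ) else 1) * jacobiSym n m.natAbs := by
  have hm2 : m % 2 = 1 := Int.odd_iff.mp hm
  have hn2 := Nat.odd_iff.mp hn
  have hχ : (χ₄ n : ℤ) * χ₄ n = 1 := by
    have : n % 4 = 1 ∨ n % 4 = 3 := by omega
    rcases this with h | h
    · rw [χ₄_nat_one_mod_four h]; norm_num
    · rw [χ₄_nat_three_mod_four h]; norm_num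
  rcases Int.natAbs_eq m with h | h
  · have hk : Odd m.natAbs := by
      rw [Nat.odd_iff]; omega
    conv_lhs => rw [h]
    rw [flip_jacobi hk hn]
    have hiff : m.natAbs % 4 = 3 ↔ m % 4 = 3 := by omega
    by_cases h3 : m % 4 = 3
    · rw [if_pos h3, if_pos (hiff.mpr h3)]
    · rw [if_neg h3, if_neg (fun hh => h3 (hiff.mp hh))]
  · have hk : Odd m.natAbs := by
      rw [Nat.odd_iff]; omega
    conv_lhs => rw [h]
    rw [jacobiSym.neg _ hn, flip_jacobi hk hn]
    have hiff : m.natAbs % 4 = 3 ↔ m % 4 = 1 := by omega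
    have hm4 : m % 4 = 1 ∨ m % 4 = 3 := by omega
    rcases hm4 with h4 | h4
    · rw [if_pos (hiff.mpr h4), if_neg (by omega), one_mul, ← mul_assoc, hχ, one_mul]
    · rw [if_neg (fun hh => absurd (hiff.mp hh) (by omega)), if_pos h4, one_mul]

lemma jacobi_two_pow_mul (a : ℕ) {m : ℤ} (hm : Odd m) {n : ℕ} (hn : Odd n) :
    jacobiSym (2 ^ a * m) n =
      (χ₈ n : ℤ) ^ a * ((if m % 4 = 3 then (χ₄ n : ℤ) else 1) * jacobiSym n m.natAbs) := by
  rw [jacobiSym.mul_left, jacobiSym.pow_left, jacobiSym.at_two hn, jacobi_odd_num hm hn]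

lemma chi8_sq {n : ℕ} (hn : Odd n) : (χ₈ n : ℤ) * χ₈ n = 1 := by
  have hn2 := Nat.odd_iff.mp hn
  rw [χ₈_nat_eq_if_mod_eight, if_neg (by omega)]
  split <;> norm_num

/-- Periodicity of `J(D|·)` mod `|D|` on odd numbers, for `D ≡ 0 (mod 4)`. -/
lemma period_even (D : ℤ) (hD0 : D % 4 = 0) (hD : D ≠ 0) {n₁ n₂ : ℕ}
    (h1 : Odd n₁) (h2 : Odd n₂) (hmod : n₁ % D.natAbs = n₂ % D.natAbs) :
    jacobiSym D n₁ = jacobiSym D n₂ := by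
  obtain ⟨a, m', hm', hdm⟩ := Nat.exists_eq_pow_mul_and_not_dvd
    (n := D.natAbs) (by simpa using hD) 2 (by norm_num)
  have hm'odd : m' % 2 = 1 := Nat.two_dvd_ne_zero.mp hm'
  -- D = ± 2^a * m'
  have hsign : D = 2 ^ a * (m' : ℤ) ∨ D = 2 ^ a * (-(m' : ℤ)) := by
    rcases Int.natAbs_eq D with h | h
    · left; rw [h, hdm]; push_cast; ring
    · right; rw [h, hdm]; push_cast; ring
  have ha2 : 2 ≤ a := by
    by_contra hcon
    interval_cases a <;> [skip; skip] <;>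
      rcases hsign with h | h <;> omega
  have h4d : n₁ % 4 = n₂ % 4 := by
    have h4 : 4 ∣ D.natAbs := by
      have : (2:ℕ)^2 ∣ 2^a := pow_dvd_pow 2 ha2
      rw [hdm]; exact dvd_mul_of_dvd_left (by simpa using this) _
    rw [← Nat.mod_mod_of_dvd n₁ h4, ← Nat.mod_mod_of_dvd n₂ h4, hmod]
  have hmd : n₁ % m' = n₂ % m' := by
    have hmdvd : m' ∣ D.natAbs := hdm ▸ Dvd.intro_left _ rfl
    rw [← Nat.mod_mod_of_dvd n₁ hmdvd, ← Nat.mod_mod_of_dvd n₂ hmdvd, hmod]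
  have hχ₄ : (χ₄ n₁ : ℤ) = χ₄ n₂ := by
    rw [χ₄_nat_mod_four, χ₄_nat_mod_four n₂, h4d]
  have hχ₈ : (χ₈ n₁ : ℤ) ^ a = (χ₈ n₂ : ℤ) ^ a := by
    rcases Nat.even_or_odd a with he | ho
    · obtain ⟨b, rfl⟩ := he
      have e1 : (χ₈ n₁ : ℤ) ^ 2 = 1 := by rw [sq, chi8_sq h1]
      have e2 : (χ₈ n₂ : ℤ) ^ 2 = 1 := by rw [sq, chi8_sq h2]
      rw [← two_mul, pow_mul, pow_mul, e1, e2]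
    · have ha3 : 3 ≤ a := by
        rcases ho with ⟨b, rfl⟩; omega
      have h8 : n₁ % 8 = n₂ % 8 := by
        have h8d : 8 ∣ D.natAbs := by
          have : (2:ℕ)^3 ∣ 2^a := pow_dvd_pow 2 ha3
          rw [hdm]; exact dvd_mul_of_dvd_left (by simpa using this) _
        rw [← Nat.mod_mod_of_dvd n₁ h8d, ← Nat.mod_mod_of_dvd n₂ h8d, hmod]
      rw [χ₈_nat_mod_eight, χ₈_nat_mod_eight n₂, h8]
  have hJ : jacobiSym n₁ m' = jacobiSym n₂ m' := by
    apply jacobiSym.mod_left'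
    omega
  have hmodd : Odd (m' : ℤ) := by rw [Int.odd_iff]; omega
  rcases hsign with h | h
  · rw [h, jacobi_two_pow_mul a hmodd h1, jacobi_two_pow_mul a hmodd h2, hχ₄, hχ₈]
    simp only [Int.natAbs_natCast]
    rw [hJ]
  · have hneg : Odd (-(m' : ℤ)) := hmodd.neg
    rw [h, jacobi_two_pow_mul a hneg h1, jacobi_two_pow_mul a hneg h2, hχ₄, hχ₈]
    simp only [Int.natAbs_neg, Int.natAbs_natCast]
    rw [hJ]

/-- For `D ≡ 1 (mod 4)`, `kron D q = J(q | |D|)` for every prime `q`. -/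
lemma kron_eq_jacobi_flip {D : ℤ} (hD1 : D % 4 = 1) {q : ℕ} (hq : q.Prime) :
    kron D q = jacobiSym q D.natAbs := by
  have hd2 : D.natAbs % 2 = 1 := by omega
  by_cases h2 : q = 2
  · subst h2
    rw [kron, if_pos rfl, show ((2:ℕ):ℤ) = 2 by norm_num,
      jacobiSym.at_two (Nat.odd_iff.mpr hd2), χ₈_nat_eq_if_mod_eight]
    have h8 : D % 8 = 1 ∨ D % 8 = 5 := by omega
    have hn2 : ¬ D.natAbs % 2 = 0 := by omega
    rcases h8 with h | h
    · have h7 : D.natAbs % 8 = 1 ∨ D.natAbs % 8 = 7 := by omega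
      rw [if_pos h, if_neg hn2, if_pos h7]
    · have h7 : ¬ (D.natAbs % 8 = 1 ∨ D.natAbs % 8 = 7) := by omega
      rw [if_neg (show ¬ D % 8 = 1 by omega), if_pos h, if_neg hn2, if_neg h7]
  · have hqodd : Odd q := hq.odd_of_ne_two h2
    have hq2 := Nat.odd_iff.mp hqodd
    rw [kron, if_neg h2]
    rcases Int.natAbs_eq D with h | h
    · conv_lhs => rw [h]
      exact jacobiSym.quadratic_reciprocity_one_mod_four (by omega) hqodd
    · conv_lhs => rw [h]
      rw [jacobiSym.neg _ hqodd, flip_jacobi (Nat.odd_iff.mpr hd2) hqodd,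
        if_pos (by omega), ← mul_assoc]
      have hχ : (χ₄ q : ℤ) * χ₄ q = 1 := by
        have : q % 4 = 1 ∨ q % 4 = 3 := by omega
        rcases this with h' | h'
        · rw [χ₄_nat_one_mod_four h']; norm_num
        · rw [χ₄_nat_three_mod_four h']; norm_num
      rw [hχ, one_mul]

/-- For `D ≡ 1 (mod 4)`, the product of `kron D` over prime factors of `n` is `J(n | |D|)`. -/
lemma chi_eq_jacobi_odd {D : ℤ} (hD1 : D % 4 = 1) {n : ℕ} (hn : 0 < n) :
    ((n.primeFactorsList).map (kron D)).prod = jacobiSym n D.natAbs := by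
  have h1 : (n.primeFactorsList).map (kron D)
      = (n.primeFactorsList.map (Nat.cast : ℕ → ℤ)).map (fun a => jacobiSym a D.natAbs) := by
    rw [List.map_map]
    apply List.map_congr_left
    intro q hq
    exact kron_eq_jacobi_flip hD1 (Nat.prime_of_mem_primeFactorsList hq)
  rw [h1, ← jacobiSym.list_prod_left]
  congr 1
  rw [← Nat.cast_list_prod, Nat.prod_primeFactorsList hn.ne']

/-- For `D ≡ 0 (mod 4)` and odd `n`, the product of `kron D` over prime factors is `J(D | n)`. -/
lemma chi_eq_jacobi_even {D : ℤ} {n : ℕ} (hn : 0 < n) (hodd : Odd n) :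
    ((n.primeFactorsList).map (kron D)).prod = jacobiSym D n := by
  have h1 : (n.primeFactorsList).map (kron D)
      = (n.primeFactorsList).map (fun q => jacobiSym D q) := by
    apply List.map_congr_left
    intro q hq
    have hq2 : q ≠ 2 := by
      rintro rfl
      have h2 : 2 ∣ n := Nat.dvd_of_mem_primeFactorsList hq
      rw [Nat.odd_iff] at hodd
      omega
    rw [kron, if_neg hq2]
  rw [h1, ← jacobiSym.list_prod_right
    (fun q hq => (Nat.prime_of_mem_primeFactorsList hq).ne_zero),
    Nat.prod_primeFactorsList hn.ne']

lemma kron_unit {D : ℤ} (hD : D % 4 = 0 ∨ D % 4 = 1) {n : ℕ}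
    (hcop : Nat.Coprime n D.natAbs) {q : ℕ} (hq : q ∈ n.primeFactorsList) :
    kron D q = 1 ∨ kron D q = -1 := by
  have hqp := Nat.prime_of_mem_primeFactorsList hq
  have hqn : q ∣ n := Nat.dvd_of_mem_primeFactorsList hq
  have hqd : ¬ q ∣ D.natAbs := by
    intro hdvd
    have hg : q ∣ Nat.gcd n D.natAbs := Nat.dvd_gcd hqn hdvd
    rw [hcop] at hg
    exact hqp.one_lt.ne' (Nat.dvd_one.mp hg)
  by_cases h2 : q = 2
  · subst h2
    have hd2 : D.natAbs % 2 = 1 := by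
      rcases Nat.even_or_odd D.natAbs with he | ho
      · exact absurd (even_iff_two_dvd.mp he) hqd
      · exact Nat.odd_iff.mp ho
    have hD1 : D % 4 = 1 := by rcases hD with h | h <;> omega
    have h8 : D % 8 = 1 ∨ D % 8 = 5 := by omega
    rw [kron, if_pos rfl]
    rcases h8 with h | h
    · left; rw [if_pos h]
    · right; rw [if_neg (by omega), if_pos h]
  · rw [kron, if_neg h2]
    apply jacobiSym.eq_one_or_neg_one
    have hco : Nat.Coprime q D.natAbs := (Nat.Prime.coprime_iff_not_dvd hqp).mpr hqd
    simpa [Int.gcd, Nat.coprime_comm] using hco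

lemma chi_prod_eq {D : ℤ} (hD : D % 4 = 0 ∨ D % 4 = 1) {n : ℕ}
    (hcop : Nat.Coprime n D.natAbs) :
    ((n.primeFactorsList).map (kron D)).prod = (-1) ^ (OmegaMinus D n) := by
  rw [prod_eq_neg_one_pow _ (fun x hx => by
    obtain ⟨q, hq, rfl⟩ := List.mem_map.mp hx
    exact kron_unit hD hcop hq), OmegaMinus]
  congr 1
  rw [List.filter_map, List.length_map]
  rfl

theorem stmt2 (D : ℤ) (hD : D % 4 = 0 ∨ D % 4 = 1) (hns : ¬ IsSquare D)
    (d : ℕ) (hd : d = D.natAbs) (s₁ s₂ : ℕ) (hs₁ : 0 < s₁) (hs₂ : 0 < s₂)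
    (hgcd : Nat.gcd (d * s₁) s₂ = 1) (hodd : Odd (OmegaMinus D s₂))
    (hlt : d * s₁ < s₂) :
    ∃ q : ℕ, q.Prime ∧ kron D q = -1 ∧ q ∣ (s₂ - d * s₁) ∧
      Nat.gcd q (s₁ * s₂) = 1 ∧ q ≤ s₂ - d * s₁ := by
  subst hd
  have hDne : D ≠ 0 := by rintro rfl; exact hns ⟨0, by norm_num⟩
  have hdpos : 0 < D.natAbs := Int.natAbs_pos.mpr hDne
  set M := s₂ - D.natAbs * s₁ with hMdef
  have hMpos : 0 < M := by omega
  have hs2M : s₂ = M + D.natAbs * s₁ := by omega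
  have hcop2 : Nat.Coprime s₂ D.natAbs :=
    (Nat.Coprime.coprime_dvd_left (dvd_mul_right _ _) hgcd).symm
  have hcopM : Nat.Coprime M D.natAbs := by
    have h := (Nat.coprime_add_mul_left_right D.natAbs M s₁).mp (hs2M ▸ hcop2.symm)
    exact h.symm
  have hmodeq : M % D.natAbs = s₂ % D.natAbs := by
    conv_rhs => rw [hs2M]
    rw [Nat.add_mul_mod_self_left]
  -- the two character products agree
  have hchi : ((M.primeFactorsList).map (kron D)).prod
      = ((s₂.primeFactorsList).map (kron D)).prod := by
    rcases hD with hD0 | hD1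
    · -- D ≡ 0 mod 4 : both M and s₂ are odd
      have hd2 : 2 ∣ D.natAbs := by omega
      have hs2odd : Odd s₂ := by
        rw [Nat.odd_iff]
        rcases Nat.even_or_odd s₂ with he | ho
        · exfalso
          have h2 : 2 ∣ Nat.gcd s₂ D.natAbs := Nat.dvd_gcd (even_iff_two_dvd.mp he) hd2
          rw [hcop2] at h2; omega
        · exact Nat.odd_iff.mp ho
      have hModd : Odd M := by
        rw [Nat.odd_iff]
        rcases Nat.even_or_odd M with he | ho
        · exfalso
          have h2 : 2 ∣ Nat.gcd M D.natAbs := Nat.dvd_gcd (even_iff_two_dvd.mp he) hd2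
          rw [hcopM] at h2; omega
        · exact Nat.odd_iff.mp ho
      rw [chi_eq_jacobi_even hMpos hModd, chi_eq_jacobi_even hs₂ hs2odd]
      exact period_even D hD0 hDne hModd hs2odd hmodeq
    · -- D ≡ 1 mod 4
      rw [chi_eq_jacobi_odd hD1 hMpos, chi_eq_jacobi_odd hD1 hs₂]
      apply jacobiSym.mod_left'
      exact_mod_cast congrArg (Nat.cast (R := ℤ)) hmodeq
  have hOM : Odd (OmegaMinus D M) := by
    have h1 : ((-1 : ℤ)) ^ (OmegaMinus D M) = (-1) ^ (OmegaMinus D s₂) := by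
      rw [← chi_prod_eq hD hcopM, ← chi_prod_eq hD hcop2, hchi]
    rw [Odd.neg_one_pow hodd] at h1
    rcases Nat.even_or_odd (OmegaMinus D M) with he | ho
    · rw [Even.neg_one_pow he] at h1; norm_num at h1
    · exact ho
  -- extract a prime from the filtered list
  have hlen : 0 < ((M.primeFactorsList).filter (fun q => kron D q = -1)).length := by
    rcases hOM with ⟨k, hk⟩
    rw [OmegaMinus] at hk
    omega
  obtain ⟨q, hqmem⟩ := List.exists_mem_of_length_pos hlen
  have hq' := List.mem_filter.mp hqmem
  have hqfac : q ∈ M.primeFactorsList := hq'.1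
  have hqkron : kron D q = -1 := by
    have := hq'.2
    simpa using this
  have hqp : q.Prime := Nat.prime_of_mem_primeFactorsList hqfac
  have hqM : q ∣ M := Nat.dvd_of_mem_primeFactorsList hqfac
  have hqs2 : ¬ q ∣ s₂ := by
    intro h
    have hds : q ∣ D.natAbs * s₁ := by
      have : q ∣ s₂ - M := Nat.dvd_sub h hqM
      simpa [hs2M] using this
    have hg : q ∣ Nat.gcd (D.natAbs * s₁) s₂ := Nat.dvd_gcd hds h
    rw [hgcd] at hg
    exact hqp.one_lt.ne' (Nat.dvd_one.mp hg)
  have hqs1 : ¬ q ∣ s₁ := by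
    intro h
    apply hqs2
    rw [hs2M]
    exact Nat.dvd_add hqM (Dvd.dvd.mul_left h _)
  refine ⟨q, hqp, hqkron, hqM, ?_, Nat.le_of_dvd hMpos hqM⟩
  exact Nat.Coprime.mul_right ((hqp.coprime_iff_not_dvd).mpr hqs1)
    ((hqp.coprime_iff_not_dvd).mpr hqs2)
end

section
/- Let D be a negative non-square integer with D ≡ 0 or 1 (mod 4), d = |D|, and let s₁, s₂ be positive integers with gcd(d·s₁, s₂) = 1, the number Ω⁻(s₂) of prime divisors of s₂ (with multiplicity) with Kronecker symbol -1 even, and s₂ < d·s₁. Then M = d·s₁ - s₂ has a prime divisor q with (D/q) = -1 and gcd(q, s₁·s₂) = 1. -/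
open ZMod

private lemma kron_cases (D : ℤ) (q : ℕ) : kron D q = 0 ∨ kron D q = 1 ∨ kron D q = -1 := by
  unfold kron
  split
  · split
    · tauto
    · split <;> tauto
  · rcases jacobiSym.trichotomy D q with h | h | h <;> tauto

private lemma prod_zero_or_one : ∀ l : List ℤ, (∀ x ∈ l, x = 0 ∨ x = 1) →
    l.prod = 0 ∨ l.prod = 1
  | [], _ => by simp
  | x :: l, h => by
    have hx := h x (by simp)
    have hl := prod_zero_or_one l (fun y hy => h y (by simp [hy]))
    rw [List.prod_cons]
    rcases hx with h1 | h1 <;> rcases hl with h2 | h2 <;> simp [h1, h2]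

private lemma exists_neg_one {D : ℤ} {l : List ℕ} (h : (l.map (kron D)).prod = -1) :
    ∃ q ∈ l, kron D q = -1 := by
  by_contra hc
  push_neg at hc
  have key : ∀ x ∈ l.map (kron D), x = 0 ∨ x = 1 := by
    intro x hx
    obtain ⟨q, hq, rfl⟩ := List.mem_map.mp hx
    rcases kron_cases D q with h0 | h1 | hm
    · tauto
    · tauto
    · exact absurd hm (hc q hq)
  rcases prod_zero_or_one _ key with h' | h' <;> omega

private lemma prod_map_pm (D : ℤ) : ∀ l : List ℕ,
    (∀ q ∈ l, kron D q = 1 ∨ kron D q = -1) →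
    (l.map (kron D)).prod = (-1) ^ (l.filter (fun q => kron D q = -1)).length
  | [], _ => by simp
  | q :: l, h => by
    have ih := prod_map_pm D l (fun r hr => h r (by simp [hr]))
    rcases h q (by simp) with h1 | hm
    · rw [List.map_cons, List.prod_cons, h1, one_mul, ih, List.filter_cons]
      have : ¬ (kron D q = -1) := by rw [h1]; norm_num
      simp [this]
    · rw [List.map_cons, List.prod_cons, hm, ih, List.filter_cons]
      simp [hm, pow_succ, mul_comm]

/-- product formula: `Kf D n` is the product of `kron D q` over prime factors of `n`. -/
private def Kf (D : ℤ) (n : ℕ) : ℤ := ((n.primeFactorsList).map (kron D)).prod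

private lemma Kf_eq_jacobi_left {D : ℤ} {n d : ℕ}
    (hp : ∀ q ∈ n.primeFactorsList, kron D q = jacobiSym q d) (hn : n ≠ 0) :
    Kf D n = jacobiSym n d := by
  have hcast : ((n.primeFactorsList.map (Nat.cast : ℕ → ℤ)).prod) = (n : ℤ) := by
    rw [← Nat.cast_list_prod, Nat.prod_primeFactorsList hn]
  rw [Kf, ← hcast, jacobiSym.list_prod_left, List.map_map]
  exact congrArg List.prod (List.map_congr_left fun q hq => hp q hq)

private lemma Kf_eq_jacobi_right {D : ℤ} {n : ℕ}
    (hp : ∀ q ∈ n.primeFactorsList, kron D q = jacobiSym D q) (hn : n ≠ 0) :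
    Kf D n = jacobiSym D n := by
  conv_rhs => rw [← Nat.prod_primeFactorsList hn]
  rw [jacobiSym.list_prod_right
    (fun q hq => (Nat.prime_of_mem_primeFactorsList hq).ne_zero)]
  exact congrArg List.prod (List.map_congr_left fun q hq => hp q hq)

/-- Case `D % 4 = 1`: for every prime `p`, `kron D p = J(p | |D|)`. -/
private lemma kron_caseOdd {D : ℤ} (hDneg : D < 0) (hD1 : D % 4 = 1) {p : ℕ}
    (hp : p.Prime) : kron D p = jacobiSym p D.natAbs := by
  set d := D.natAbs with hd
  have hdD : (d : ℤ) = -D := by omega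
  have hd4 : d % 4 = 3 := by omega
  have hdodd : Odd d := by rw [Nat.odd_iff]; omega
  by_cases hp2 : p = 2
  · subst hp2
    have h8 : D % 8 = 1 ∨ D % 8 = 5 := by omega
    have hj : jacobiSym (2 : ℕ) d = χ₈ d := by
      exact_mod_cast jacobiSym.at_two hdodd
    rw [hj, χ₈_nat_eq_if_mod_eight]
    rcases h8 with h8 | h8
    · have : d % 8 = 7 := by omega
      simp [kron, h8, this, Nat.odd_iff.mp hdodd]
    · have : d % 8 = 3 := by omega
      have h81 : ¬ (D % 8 = 1) := by omega
      simp [kron, h8, h81, this, Nat.odd_iff.mp hdodd]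
  · have hpodd : Odd p := hp.odd_of_ne_two hp2
    have hk : kron D p = jacobiSym D p := by simp [kron, hp2]
    have hDd : D = -1 * (d : ℤ) := by omega
    rw [hk, hDd, jacobiSym.mul_left, jacobiSym.at_neg_one hpodd,
      jacobiSym.quadratic_reciprocity hdodd hpodd]
    have hhalf : Odd (d / 2) := by rw [Nat.odd_iff]; omega
    have h1 : ((-1 : ℤ)) ^ (d / 2 * (p / 2)) = (-1) ^ (p / 2) := by
      rw [pow_mul, Odd.neg_one_pow hhalf]
    have h2 : (χ₄ p : ℤ) = (-1) ^ (p / 2) := χ₄_eq_neg_one_pow (Nat.odd_iff.mp hpodd)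
    rw [h1, h2, ← mul_assoc, ← pow_add]
    have : Even (p / 2 + p / 2) := ⟨p / 2, by ring⟩
    rw [Even.neg_one_pow this, one_mul]

/-- Case `D % 4 = 0`: the character relation `J(D|a) * J(D|b) = -1` for `a + b ≡ 0 mod |D|`. -/
private lemma jacobi_caseEven {D : ℤ} (hDneg : D < 0) (hD0 : D % 4 = 0) {a b : ℕ}
    (ha : Odd a) (hb : Odd b) (hdvd : D.natAbs ∣ (a + b))
    (hbd : Nat.Coprime b D.natAbs) :
    jacobiSym D a * jacobiSym D b = -1 := by
  set d := D.natAbs with hd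
  have hdD : (d : ℤ) = -D := by omega
  have hd0 : d ≠ 0 := by omega
  set e := d.factorization 2 with he
  set d' := d / 2 ^ e with hd'
  have heq : 2 ^ e * d' = d := Nat.ordProj_mul_ordCompl_eq_self d 2
  have hd'2 : ¬ (2 ∣ d') := Nat.not_dvd_ordCompl Nat.prime_two hd0
  have hd'odd : Odd d' := Nat.odd_iff.mpr (by omega)
  have hd4 : d % 4 = 0 := by omega
  have he2 : 2 ≤ e := by
    rw [he, ← Nat.Prime.pow_dvd_iff_le_factorization Nat.prime_two hd0]
    omega
  have hcast : (2 : ℤ) ^ e * (d' : ℤ) = (d : ℤ) := by exact_mod_cast congrArg (Nat.cast : ℕ → ℤ) heq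
  have hDfac : D = -1 * ((2 : ℤ) ^ e * (d' : ℤ)) := by rw [hcast]; omega
  -- expansion of J(D|m) for odd m
  have expand : ∀ m : ℕ, Odd m → jacobiSym D m =
      (χ₄ m : ℤ) * (χ₈ m : ℤ) ^ e * ((-1 : ℤ) ^ (d' / 2 * (m / 2)) * jacobiSym m d') := by
    intro m hm
    rw [hDfac, jacobiSym.mul_left, jacobiSym.mul_left, jacobiSym.pow_left,
      jacobiSym.at_neg_one hm, jacobiSym.at_two hm,
      jacobiSym.quadratic_reciprocity hd'odd hm, mul_assoc]
  have hboddn : b % 2 = 1 := Nat.odd_iff.mp hb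
  have haoddn : a % 2 = 1 := Nat.odd_iff.mp ha
  have h2ed : (2 : ℕ) ^ e ∣ d := ⟨d', heq.symm⟩
  have h4d : (4 : ℕ) ∣ d := by
    have h : (2 : ℕ) ^ 2 ∣ 2 ^ e := pow_dvd_pow 2 he2
    norm_num at h
    exact h.trans h2ed
  have h4ab : (a + b) % 4 = 0 := Nat.mod_eq_zero_of_dvd (h4d.trans hdvd)
  -- c1 : χ₄ a * χ₄ b = -1
  have c1 : (χ₄ a : ℤ) * χ₄ b = -1 := by
    rw [χ₄_nat_eq_if_mod_four, χ₄_nat_eq_if_mod_four]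
    have h : a % 4 = 1 ∧ b % 4 = 3 ∨ a % 4 = 3 ∧ b % 4 = 1 := by omega
    rcases h with ⟨h1, h2⟩ | ⟨h1, h2⟩ <;> simp [h1, h2, haoddn, hboddn] <;> omega
  -- values of χ₈ are ±1 at odd numbers
  have chi8pm : ∀ m : ℕ, m % 2 = 1 → (χ₈ m : ℤ) = 1 ∨ (χ₈ m : ℤ) = -1 := by
    intro m hm
    rw [χ₈_nat_eq_if_mod_eight]
    split
    · omega
    · split <;> tauto
  -- c2 : (χ₈ a * χ₈ b)^e = 1
  have c2 : ((χ₈ a : ℤ) * χ₈ b) ^ e = 1 := by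
    rcases Nat.even_or_odd e with hee | heo
    · rcases chi8pm a haoddn with h1 | h1 <;> rcases chi8pm b hboddn with h2 | h2 <;>
        rw [h1, h2] <;> simp [hee.neg_one_pow]
    · have he3 : 3 ≤ e := by
        have := Nat.odd_iff.mp heo
        omega
      have h8d : (8 : ℕ) ∣ d := by
        have h : (2 : ℕ) ^ 3 ∣ 2 ^ e := pow_dvd_pow 2 he3
        norm_num at h
        exact h.trans h2ed
      have h8ab : (a + b) % 8 = 0 := Nat.mod_eq_zero_of_dvd (h8d.trans hdvd)
      have hval : (χ₈ a : ℤ) * χ₈ b = 1 := by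
        rw [χ₈_nat_eq_if_mod_eight, χ₈_nat_eq_if_mod_eight]
        have h : a % 8 = 1 ∧ b % 8 = 7 ∨ a % 8 = 7 ∧ b % 8 = 1 ∨
            a % 8 = 3 ∧ b % 8 = 5 ∨ a % 8 = 5 ∧ b % 8 = 3 := by omega
        rcases h with ⟨h1, h2⟩ | ⟨h1, h2⟩ | ⟨h1, h2⟩ | ⟨h1, h2⟩ <;>
          simp [h1, h2, haoddn, hboddn] <;> omega
      rw [hval, one_pow]
  -- c3 : sign * jacobi part
  have hd'dvd : d' ∣ d := ⟨2 ^ e, by rw [← heq]; ring⟩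
  have hbd' : Nat.Coprime b d' := Nat.Coprime.coprime_dvd_right hd'dvd hbd
  have hjb2 : jacobiSym (b : ℤ) d' * jacobiSym (b : ℤ) d' = 1 := by
    have := jacobiSym.sq_one (a := (b : ℤ)) (b := d') (by
      rw [Int.gcd_natCast_natCast]; exact hbd')
    rwa [sq] at this
  have hmodd' : ((a : ℤ)) % d' = ((-(b : ℤ))) % d' := by
    obtain ⟨k, hk⟩ := hdvd
    have hkd : (a : ℤ) = -(b : ℤ) + (d' : ℤ) * (2 ^ e * k) := by
      have : (a : ℤ) + b = (d : ℤ) * k := by exact_mod_cast congrArg (Nat.cast : ℕ → ℤ) hk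
      rw [← hcast] at this
      linarith [this]
    rw [hkd, Int.add_mul_emod_self_left]
  have hja : jacobiSym (a : ℤ) d' = (χ₄ d' : ℤ) * jacobiSym (b : ℤ) d' := by
    rw [jacobiSym.mod_left' hmodd', jacobiSym.neg _ hd'odd]
  have hhalfodd : (a / 2 + b / 2) % 2 = 1 := by omega
  have c3 : ((-1 : ℤ) ^ (d' / 2 * (a / 2)) * jacobiSym (a : ℤ) d') *
      ((-1 : ℤ) ^ (d' / 2 * (b / 2)) * jacobiSym (b : ℤ) d') = 1 := by
    have hsgn : (-1 : ℤ) ^ (d' / 2 * (a / 2)) * (-1 : ℤ) ^ (d' / 2 * (b / 2)) =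
        (-1 : ℤ) ^ (d' / 2) := by
      rw [← pow_add, ← Nat.mul_add]
      rcases Nat.even_or_odd (d' / 2) with h | h
      · rw [Even.neg_one_pow h, Even.neg_one_pow (h.mul_right _)]
      · rw [Odd.neg_one_pow h, Odd.neg_one_pow ]
        exact h.mul (Nat.odd_iff.mpr hhalfodd)
    have hchi : (χ₄ d' : ℤ) = (-1) ^ (d' / 2) := χ₄_eq_neg_one_pow (Nat.odd_iff.mp hd'odd)
    calc ((-1 : ℤ) ^ (d' / 2 * (a / 2)) * jacobiSym (a : ℤ) d') *
        ((-1 : ℤ) ^ (d' / 2 * (b / 2)) * jacobiSym (b : ℤ) d')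
        = ((-1 : ℤ) ^ (d' / 2 * (a / 2)) * (-1 : ℤ) ^ (d' / 2 * (b / 2))) *
          (jacobiSym (a : ℤ) d' * jacobiSym (b : ℤ) d') := by ring
      _ = (-1 : ℤ) ^ (d' / 2) * ((χ₄ d' : ℤ) * (jacobiSym (b : ℤ) d' * jacobiSym (b : ℤ) d')) := by
          rw [hsgn, hja]; ring
      _ = 1 := by
          rw [hjb2, mul_one, hchi, ← pow_add]
          exact Even.neg_one_pow ⟨d' / 2, by ring⟩
  rw [expand a ha, expand b hb]
  calc (χ₄ a : ℤ) * (χ₈ a : ℤ) ^ e * ((-1 : ℤ) ^ (d' / 2 * (a / 2)) * jacobiSym a d') *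
      ((χ₄ b : ℤ) * (χ₈ b : ℤ) ^ e * ((-1 : ℤ) ^ (d' / 2 * (b / 2)) * jacobiSym b d'))
      = ((χ₄ a : ℤ) * χ₄ b) * (((χ₈ a : ℤ) * χ₈ b) ^ e) *
        (((-1 : ℤ) ^ (d' / 2 * (a / 2)) * jacobiSym a d') *
         ((-1 : ℤ) ^ (d' / 2 * (b / 2)) * jacobiSym b d')) := by ring
    _ = -1 := by rw [c1, c2, c3]; ring

theorem stmt3 (D : ℤ) (hDneg : D < 0) (hD : D % 4 = 0 ∨ D % 4 = 1) (hns : ¬ IsSquare D)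
    (d : ℕ) (hd : d = D.natAbs) (s₁ s₂ : ℕ) (hs₁ : 0 < s₁) (hs₂ : 0 < s₂)
    (hgcd : Nat.gcd (d * s₁) s₂ = 1) (heven : Even (OmegaMinus D s₂))
    (hlt : s₂ < d * s₁) :
    ∃ q : ℕ, q.Prime ∧ kron D q = -1 ∧ q ∣ (d * s₁ - s₂) ∧
      Nat.gcd q (s₁ * s₂) = 1 := by
  subst hd
  set n := D.natAbs * s₁ with hn
  set a := n - s₂ with haa
  have hdpos : 0 < D.natAbs := by omega
  have ha0 : a ≠ 0 := by omega
  have habs : a + s₂ = n := by omega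
  have hdn : D.natAbs ∣ n := ⟨s₁, hn⟩
  have hds2 : Nat.Coprime D.natAbs s₂ := Nat.Coprime.coprime_dvd_left (dvd_mul_right _ _) hgcd
  -- every prime factor of s₂ has kron = ±1
  have hpm : ∀ q ∈ s₂.primeFactorsList, kron D q = 1 ∨ kron D q = -1 := by
    intro q hq
    have hqp := Nat.prime_of_mem_primeFactorsList hq
    have hqs := Nat.dvd_of_mem_primeFactorsList hq
    have hqd : ¬ (q ∣ D.natAbs) := by
      intro hh
      have h1 : q ∣ 1 := hds2 ▸ Nat.dvd_gcd hh hqs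
      exact hqp.ne_one (Nat.dvd_one.mp h1)
    by_cases hq2 : q = 2
    · subst hq2
      have hDodd : D % 4 = 1 := by
        rcases hD with h | h
        · exfalso
          apply hqd
          have : D.natAbs % 2 = 0 := by omega
          omega
        · exact h
      have h8 : D % 8 = 1 ∨ D % 8 = 5 := by omega
      rcases h8 with h8 | h8
      · left; simp [kron, h8]
      · right
        have : ¬ (D % 8 = 1) := by omega
        simp [kron, h8, this]
    · have hk : kron D q = jacobiSym D q := by simp [kron, hq2]
      rw [hk]
      apply jacobiSym.eq_one_or_neg_one
      have : Nat.Coprime q D.natAbs := (Nat.Prime.coprime_iff_not_dvd hqp).mpr hqd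
      have h2 : Nat.gcd D.natAbs q = 1 := this.symm
      simpa [Int.gcd, Int.natAbs_natCast] using h2
  have Kb1 : Kf D s₂ = 1 := by
    rw [Kf, prod_map_pm D _ hpm]
    exact Even.neg_one_pow heven
  -- Kf D a = -1
  have Ka : Kf D a = -1 := by
    rcases hD with h0 | h1
    · -- D ≡ 0 mod 4
      have h2d : 2 ∣ D.natAbs := by omega
      have hs2odd : Odd s₂ := by
        rw [Nat.odd_iff]
        rcases Nat.even_or_odd s₂ with he | ho
        · exfalso
          have h1 : (2 : ℕ) ∣ 1 := hds2 ▸ Nat.dvd_gcd h2d he.two_dvd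
          norm_num at h1
        · exact Nat.odd_iff.mp ho
      have haodd : Odd a := by
        rw [Nat.odd_iff]
        obtain ⟨t, ht⟩ := h2d
        obtain ⟨k, hk⟩ := hdn
        have hs2' := Nat.odd_iff.mp hs2odd
        have : n = 2 * (t * k) := by rw [hk, ht]; ring
        omega
      have hall : ∀ q ∈ a.primeFactorsList, kron D q = jacobiSym D q := by
        intro q hq
        have hqp := Nat.prime_of_mem_primeFactorsList hq
        have hq2 : q ≠ 2 := by
          intro hh
          subst hh
          have := Nat.dvd_of_mem_primeFactorsList hq
          rw [Nat.odd_iff] at haodd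
          omega
        simp [kron, hq2]
      have halls : ∀ q ∈ s₂.primeFactorsList, kron D q = jacobiSym D q := by
        intro q hq
        have hqp := Nat.prime_of_mem_primeFactorsList hq
        have hq2 : q ≠ 2 := by
          intro hh
          subst hh
          have := Nat.dvd_of_mem_primeFactorsList hq
          rw [Nat.odd_iff] at hs2odd
          omega
        simp [kron, hq2]
      have hKa : Kf D a = jacobiSym D a := Kf_eq_jacobi_right hall ha0
      have hKs : Kf D s₂ = jacobiSym D s₂ := Kf_eq_jacobi_right halls (by omega)
      have hmain : jacobiSym D a * jacobiSym D s₂ = -1 :=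
        jacobi_caseEven hDneg h0 haodd hs2odd (habs ▸ hdn) hds2.symm
      rw [hKa]
      rw [← hKs, Kb1] at hmain
      linarith
    · -- D ≡ 1 mod 4
      have hall : ∀ q ∈ a.primeFactorsList, kron D q = jacobiSym q D.natAbs :=
        fun q hq => kron_caseOdd hDneg h1 (Nat.prime_of_mem_primeFactorsList hq)
      have halls : ∀ q ∈ s₂.primeFactorsList, kron D q = jacobiSym q D.natAbs :=
        fun q hq => kron_caseOdd hDneg h1 (Nat.prime_of_mem_primeFactorsList hq)
      have hKa : Kf D a = jacobiSym a D.natAbs := Kf_eq_jacobi_left hall ha0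
      have hKs : Kf D s₂ = jacobiSym s₂ D.natAbs := Kf_eq_jacobi_left halls (by omega)
      have hd4 : D.natAbs % 4 = 3 := by omega
      have hdodd : Odd D.natAbs := by rw [Nat.odd_iff]; omega
      have hm : ((a : ℤ)) % D.natAbs = ((-(s₂ : ℤ))) % D.natAbs := by
        obtain ⟨k, hk⟩ := hdn
        have hcast : (a : ℤ) + s₂ = (D.natAbs : ℤ) * k := by exact_mod_cast habs.trans hk
        have : (a : ℤ) = -(s₂ : ℤ) + (D.natAbs : ℤ) * k := by linarith
        rw [this, Int.add_mul_emod_self_left]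
      calc Kf D a = jacobiSym (a : ℤ) D.natAbs := hKa
        _ = (χ₄ D.natAbs : ℤ) * jacobiSym (s₂ : ℤ) D.natAbs := by
            rw [jacobiSym.mod_left' hm, jacobiSym.neg _ hdodd]
        _ = -1 := by rw [χ₄_nat_three_mod_four hd4, ← hKs, Kb1]; norm_num
  have Ka' : ((a.primeFactorsList).map (kron D)).prod = -1 := Ka
  obtain ⟨q, hql, hqk⟩ := exists_neg_one Ka'
  have hqp := Nat.prime_of_mem_primeFactorsList hql
  have hqa : q ∣ a := Nat.dvd_of_mem_primeFactorsList hql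
  refine ⟨q, hqp, hqk, hqa, ?_⟩
  apply (Nat.Prime.coprime_iff_not_dvd hqp).mpr
  intro hdvd'
  have hqn : q ∣ n := by
    rcases (Nat.Prime.dvd_mul hqp).mp hdvd' with h1 | h2
    · exact Dvd.dvd.mul_left h1 _
    · exact habs ▸ Nat.dvd_add hqa h2
  have hqs2 : q ∣ s₂ := by
    have : s₂ = n - a := by omega
    rw [this]
    exact Nat.dvd_sub hqn hqa
  have h1 : q ∣ 1 := hgcd ▸ Nat.dvd_gcd hqn hqs2
  exact hqp.ne_one (Nat.dvd_one.mp h1)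
end

section
/- Let D be a positive non-square integer with D ≡ 0 or 1 (mod 4), d = D, and let s₁, s₂ be positive integers with gcd(d·s₁, s₂) = 1, the number Ω⁻(s₂) of prime divisors of s₂ (with multiplicity) having Kronecker symbol -1 odd, and s₂ < d·s₁. Then M = d·s₁ - s₂ has a prime divisor q with (D/q) = -1 and gcd(q, s₁·s₂) = 1. -/
/-!
Let `K = kroneckerSym D` be the completely multiplicative extension of `kron D`. On integers
prime to `D` it equals `(-1)^{Ω_D⁻}`, so `K(s₂) = -1`. With `M = d s₁ - s₂` we have
`M s₂ ≡ -s₂² (mod D)`, and `K(M s₂) = 1`: for `D ≡ 1 (mod 4)` reciprocity turns `K(n)` into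
`J(n | D)`, and for `4 ∣ D` the odd part of `D` is handled by reciprocity and the power of two by
`M s₂ ≡ -1 (mod 8)` when `8 ∣ D`. Hence `K(M) = -1`, so `Ω_D⁻(M)` is odd and some prime `q ∣ M`
has `(D/q) = -1`; such a `q` is prime to `s₁ s₂` because `M` is.
-/

open scoped NumberTheorySymbols
open ZMod

theorem Nat.sq_mod_eight_eq_one_of_odd {s : ℕ} (hs : Odd s) : s ^ 2 % 8 = 1 := by
  have h8 : s % 8 < 8 := Nat.mod_lt _ (by norm_num)
  have h2 : s % 2 = 1 := Nat.odd_iff.mp hs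
  rw [Nat.pow_mod]
  interval_cases h : s % 8 <;> omega

theorem jacobiSym_eq_χ₄_of_dvd_add_sq {u t s : ℕ} (hu : Odd u) (hs : s.Coprime u)
    (h : u ∣ t + s ^ 2) : J(t | u) = χ₄ u := by
  have hmod : (t : ℤ) ≡ -(s : ℤ) ^ 2 [ZMOD u] := by
    rw [Int.modEq_iff_dvd, show -(s : ℤ) ^ 2 - t = -((t + s ^ 2 : ℕ) : ℤ) by push_cast; ring]
    exact (Int.natCast_dvd_natCast.mpr h).neg_right
  rw [jacobiSym.mod_left' hmod, jacobiSym.neg _ hu, jacobiSym.sq_one' (by simpa using hs), mul_one]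

theorem jacobiSym_eq_one_of_dvd_add_sq {u t s : ℕ} (hu : Odd u) (ht : t % 4 = 3)
    (hs : s.Coprime u) (h : u ∣ t + s ^ 2) : J(u | t) = 1 := by
  have hχ := jacobiSym_eq_χ₄_of_dvd_add_sq hu hs h
  rcases Nat.odd_mod_four_iff.mp (Nat.odd_iff.mp hu) with hu4 | hu4
  · rw [jacobiSym.quadratic_reciprocity_one_mod_four hu4 (Nat.odd_iff.mpr (by omega)), hχ,
      χ₄_nat_one_mod_four hu4]
  · rw [jacobiSym.quadratic_reciprocity_three_mod_four hu4 ht, hχ, χ₄_nat_three_mod_four hu4,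
      neg_neg]

theorem jacobiSym_eq_one_of_four_dvd_of_dvd_add_sq {d t s : ℕ} (h4 : 4 ∣ d)
    (hs : s.Coprime d) (h : d ∣ t + s ^ 2) : J(d | t) = 1 := by
  have hs2 : s ^ 2 % 8 = 1 := Nat.sq_mod_eight_eq_one_of_odd
    (Nat.coprime_two_right.mp (hs.coprime_dvd_right (dvd_trans ⟨2, rfl⟩ h4)))
  have hd0 : d ≠ 0 := by
    rintro rfl
    simp only [Nat.coprime_zero_right, zero_dvd_iff] at hs h
    simp [hs] at h
  have ht4 : t % 4 = 3 := by have := dvd_trans h4 h; omega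
  obtain ⟨e, u, hu, rfl⟩ := Nat.exists_eq_two_pow_mul_odd hd0
  have hJu : J(u | t) = 1 := jacobiSym_eq_one_of_dvd_add_sq hu ht4
    (hs.coprime_dvd_right (dvd_mul_left u _)) (dvd_trans (dvd_mul_left u _) h)
  have hχ₈ : χ₈ t ^ e = 1 := by
    rcases lt_trichotomy e 2 with he | rfl | he
    · obtain ⟨k, rfl⟩ := hu
      interval_cases e <;> omega
    · rw [χ₈_nat_eq_if_mod_eight, if_neg (by omega)]
      split_ifs <;> norm_num
    · have h8 : 8 ∣ t + s ^ 2 :=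
        dvd_trans (dvd_trans (pow_dvd_pow 2 he) (dvd_mul_right _ u)) h
      rw [χ₈_nat_eq_if_mod_eight, if_neg (by omega), if_pos (by omega), one_pow]
  push_cast
  rw [jacobiSym.mul_left, jacobiSym.pow_left, jacobiSym.at_two (Nat.odd_iff.mpr (by omega)),
    hJu, hχ₈, one_mul]

theorem kron_eq_one_or_neg_one {D : ℤ} (hD : D % 4 = 0 ∨ D % 4 = 1) {q : ℕ}
    (h : q.Coprime D.natAbs) : kron D q = 1 ∨ kron D q = -1 := by
  by_cases h2 : q = 2
  · subst h2
    have hD2 : ¬ (2 : ℤ) ∣ D := fun h2D =>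
      Nat.not_coprime_of_dvd_of_dvd one_lt_two dvd_rfl (Int.natAbs_dvd_natAbs.mpr h2D) h
    have h8 : D % 8 = 1 ∨ D % 8 = 5 := by omega
    rcases h8 with h8 | h8 <;> simp [kron, h8]
  · rw [kron, if_neg h2]
    exact jacobiSym.eq_one_or_neg_one (by simpa [Int.gcd, Nat.coprime_comm] using h)

theorem kron_eq_jacobiSym_natAbs {D : ℤ} (hDpos : 0 < D) (hD : D % 4 = 1) {q : ℕ}
    (hq : q.Prime) : kron D q = J(q | D.natAbs) := by
  have hd4 : D.natAbs % 4 = 1 := by omega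
  by_cases h2 : q = 2
  · subst h2
    rw [Nat.cast_ofNat, jacobiSym.at_two (Nat.odd_iff.mpr (by omega)), χ₈_nat_eq_if_mod_eight,
      if_neg (by omega)]
    have h8 : D % 8 = 1 ∨ D % 8 = 5 := by omega
    rcases h8 with h8 | h8
    · simp [kron, h8, show D.natAbs % 8 = 1 by omega]
    · simp [kron, h8, show D.natAbs % 8 = 5 by omega]
  · rw [kron, if_neg h2, ← jacobiSym.quadratic_reciprocity_one_mod_four hd4 (hq.odd_of_ne_two h2),
      Int.natAbs_of_nonneg hDpos.le]

theorem List.prod_map_eq_neg_one_pow_length_filter {α : Type*} (f : α → ℤ) (l : List α)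
    (h : ∀ a ∈ l, f a = 1 ∨ f a = -1) :
    (l.map f).prod = (-1) ^ (l.filter (fun a => f a = -1)).length := by
  induction l with
  | nil => simp
  | cons a l ih =>
    rw [List.map_cons, List.prod_cons, ih fun b hb => h b (List.mem_cons_of_mem a hb),
      List.filter_cons]
    rcases h a List.mem_cons_self with ha | ha <;> simp [ha, pow_succ, mul_comm]

/-- The Kronecker symbol `(D/n)` for `n > 0`, extending `kron D` completely multiplicatively. -/
def kroneckerSym (D : ℤ) (n : ℕ) : ℤ := (n.primeFactorsList.map (kron D)).prod

theorem kroneckerSym_mul (D : ℤ) {m n : ℕ} (hm : m ≠ 0) (hn : n ≠ 0) :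
    kroneckerSym D (m * n) = kroneckerSym D m * kroneckerSym D n := by
  rw [kroneckerSym, ((Nat.perm_primeFactorsList_mul hm hn).map _).prod_eq, List.map_append,
    List.prod_append, kroneckerSym, kroneckerSym]

theorem kroneckerSym_eq_jacobiSym_of_odd (D : ℤ) {n : ℕ} (hn : Odd n) :
    kroneckerSym D n = J(D | n) := by
  have hn0 : n ≠ 0 := by rintro rfl; exact Nat.not_odd_zero hn
  conv_rhs => rw [← Nat.prod_primeFactorsList hn0]
  rw [jacobiSym.list_prod_right fun _ hq => (Nat.prime_of_mem_primeFactorsList hq).ne_zero,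
    kroneckerSym]
  congr 1
  refine List.map_congr_left fun _ hq => if_neg ?_
  rintro rfl
  exact (Nat.not_even_iff_odd.mpr hn) (even_iff_two_dvd.mpr (Nat.dvd_of_mem_primeFactorsList hq))

theorem kroneckerSym_eq_jacobiSym_natAbs {D : ℤ} (hDpos : 0 < D) (hD : D % 4 = 1) {n : ℕ}
    (hn : n ≠ 0) : kroneckerSym D n = J(n | D.natAbs) := by
  conv_rhs => rw [← Nat.prod_primeFactorsList hn]
  rw [Nat.cast_list_prod, jacobiSym.list_prod_left, List.map_map, kroneckerSym]
  exact congrArg _ (List.map_congr_left fun _ hq =>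
    kron_eq_jacobiSym_natAbs hDpos hD (Nat.prime_of_mem_primeFactorsList hq))

theorem kroneckerSym_eq_neg_one_pow_omegaMinus {D : ℤ} (hD : D % 4 = 0 ∨ D % 4 = 1) {n : ℕ}
    (hn : n.Coprime D.natAbs) : kroneckerSym D n = (-1) ^ OmegaMinus D n :=
  List.prod_map_eq_neg_one_pow_length_filter _ _ fun _ hq =>
    kron_eq_one_or_neg_one hD (hn.coprime_dvd_left (Nat.dvd_of_mem_primeFactorsList hq))

theorem kroneckerSym_eq_one_of_dvd_add_sq {D : ℤ} (hDpos : 0 < D) (hD : D % 4 = 0 ∨ D % 4 = 1)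
    {t s : ℕ} (ht : t ≠ 0) (hs : s.Coprime D.natAbs) (h : D.natAbs ∣ t + s ^ 2) :
    kroneckerSym D t = 1 := by
  rcases hD with hD0 | hD1
  · have h4 : 4 ∣ D.natAbs := by omega
    have hs2 : s ^ 2 % 4 = 1 := by
      have := Nat.sq_mod_eight_eq_one_of_odd
        (Nat.coprime_two_right.mp (hs.coprime_dvd_right (dvd_trans ⟨2, rfl⟩ h4)))
      omega
    have ht : Odd t := Nat.odd_iff.mpr (by have := dvd_trans h4 h; omega)
    rw [kroneckerSym_eq_jacobiSym_of_odd D ht, ← Int.natAbs_of_nonneg hDpos.le]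
    exact jacobiSym_eq_one_of_four_dvd_of_dvd_add_sq h4 hs h
  · rw [kroneckerSym_eq_jacobiSym_natAbs hDpos hD1 ht,
      jacobiSym_eq_χ₄_of_dvd_add_sq (Nat.odd_iff.mpr (by omega)) hs h,
      χ₄_nat_one_mod_four (by omega)]

theorem exists_prime_dvd_kron_eq_neg_one {D : ℤ} {n : ℕ} (h : Odd (OmegaMinus D n)) :
    ∃ q, q.Prime ∧ kron D q = -1 ∧ q ∣ n := by
  obtain ⟨q, hq⟩ := List.exists_mem_of_length_pos h.pos
  obtain ⟨hqn, hq⟩ := List.mem_filter.mp hq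
  exact ⟨q, Nat.prime_of_mem_primeFactorsList hqn, of_decide_eq_true hq,
    Nat.dvd_of_mem_primeFactorsList hqn⟩

theorem stmt4_general (D : ℤ) (hDpos : 0 < D) (hD : D % 4 = 0 ∨ D % 4 = 1)
    (d : ℕ) (hd : d = D.natAbs) (s₁ s₂ : ℕ) (hs₂ : 0 < s₂)
    (hgcd : Nat.gcd (d * s₁) s₂ = 1) (hodd : Odd (OmegaMinus D s₂))
    (hlt : s₂ < d * s₁) :
    ∃ q : ℕ, q.Prime ∧ kron D q = -1 ∧ q ∣ (d * s₁ - s₂) ∧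
      Nat.gcd q (s₁ * s₂) = 1 := by
  subst hd
  replace hgcd : (D.natAbs * s₁).Coprime s₂ := hgcd
  set M := D.natAbs * s₁ - s₂
  have hM0 : M ≠ 0 := Nat.sub_ne_zero_of_lt hlt
  have hMs₂ : M.Coprime s₂ := (Nat.coprime_sub_self_left hlt.le).mpr hgcd
  have hMds₁ : M.Coprime (D.natAbs * s₁) := (Nat.coprime_self_sub_left hlt.le).mpr hgcd.symm
  have hs₂d : s₂.Coprime D.natAbs := (hgcd.coprime_dvd_left (dvd_mul_right _ _)).symm
  have hK_s₂ : kroneckerSym D s₂ = -1 := by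
    rw [kroneckerSym_eq_neg_one_pow_omegaMinus hD hs₂d, hodd.neg_one_pow]
  have hK_Ms₂ : kroneckerSym D (M * s₂) = 1 :=
    kroneckerSym_eq_one_of_dvd_add_sq hDpos hD (mul_ne_zero hM0 hs₂.ne') hs₂d
      ⟨s₁ * s₂, by rw [sq, ← add_mul, Nat.sub_add_cancel hlt.le, mul_assoc]⟩
  have hK_M : kroneckerSym D M = -1 := by
    rw [kroneckerSym_mul D hM0 hs₂.ne', hK_s₂] at hK_Ms₂
    linarith
  rw [kroneckerSym_eq_neg_one_pow_omegaMinus hD (hMds₁.coprime_dvd_right (dvd_mul_right _ _)),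
    neg_one_pow_eq_neg_one_iff_odd (by norm_num)] at hK_M
  obtain ⟨q, hq, hkq, hqM⟩ := exists_prime_dvd_kron_eq_neg_one hK_M
  have hMs₁s₂ : M.Coprime (s₁ * s₂) :=
    (hMds₁.coprime_dvd_right (dvd_mul_left _ _)).mul_right hMs₂
  exact ⟨q, hq, hkq, hqM, hMs₁s₂.coprime_dvd_left hqM⟩

theorem stmt4 (D : ℤ) (hDpos : 0 < D) (hD : D % 4 = 0 ∨ D % 4 = 1) (hns : ¬ IsSquare D)
    (d : ℕ) (hd : d = D.natAbs) (s₁ s₂ : ℕ) (hs₁ : 0 < s₁) (hs₂ : 0 < s₂)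
    (hgcd : Nat.gcd (d * s₁) s₂ = 1) (hodd : Odd (OmegaMinus D s₂))
    (hlt : s₂ < d * s₁) :
    ∃ q : ℕ, q.Prime ∧ kron D q = -1 ∧ q ∣ (d * s₁ - s₂) ∧
      Nat.gcd q (s₁ * s₂) = 1 :=
  stmt4_general D hDpos hD d hd s₁ s₂ hs₂ hgcd hodd hlt
end

section
/- For every integer ℓ ≥ 1 and every integer n ≥ 2ℓ, the (n+1)-st prime satisfies p_{n+1}^ℓ < p₁·p₂⋯pₙ, where pᵢ denotes the i-th prime. -/
/-!
Since `p ^ (2ℓ) ≤ p ^ n`, it suffices to show `p_N ^ N < (p_0 ⋯ p_{N-1}) ^ 2` for `N ≥ 1`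
(primes indexed from `0`). Below, `p_j ≥ 2j + 1` gives `p_0 ⋯ p_{N-1} ≥ 2 ^ N (N - 1)!`, and
`N ^ N ≤ e ^ N N!` turns this into roughly `(2N / e) ^ N`. Above, Chebyshev's estimate
`4 ^ m ≤ 2m · C(2m, m) ≤ (2m) ^ (π(2m) + 1)` yields `p_N ≤ 2 (N + 1) √N`. For `N ≥ 36` the square of
the lower bound beats `(2 (N + 1) √N) ^ N`; the finitely many smaller `N` are checked from a
handful of values of `π`.
-/

open Finset Nat
open scoped Nat.Prime

namespace Bonse

theorem centralBinom_le_pow_primeCounting {m : ℕ} (hm : 0 < m) :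
    centralBinom m ≤ (2 * m) ^ π (2 * m) :=
  calc centralBinom m
      = ∏ p ∈ range (2 * m + 1), p ^ (centralBinom m).factorization p :=
        (prod_pow_factorization_centralBinom m).symm
    _ ≤ ∏ p ∈ range (2 * m + 1), if p.Prime then 2 * m else 1 := by
        refine prod_le_prod' fun p _ ↦ ?_
        split_ifs with hp
        · exact pow_factorization_choose_le (by omega)
        · simp [factorization_eq_zero_of_not_prime _ hp]
    _ = (2 * m) ^ π (2 * m) := by
        rw [prod_ite, prod_const_one, mul_one, prod_const, primeCounting,
          primeCounting', count_eq_card_filter_range]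

theorem nth_prime_le_of_pow_lt {n m : ℕ} (hm : 0 < m) (h : (2 * m) ^ (n + 1) < 4 ^ m) :
    nth Nat.Prime n ≤ 2 * m := by
  have hcheb : 4 ^ m ≤ (2 * m) ^ (π (2 * m) + 1) :=
    calc 4 ^ m ≤ 2 * m * centralBinom m := four_pow_le_two_mul_self_mul_centralBinom m hm
      _ ≤ 2 * m * (2 * m) ^ π (2 * m) :=
          Nat.mul_le_mul_left _ (centralBinom_le_pow_primeCounting hm)
      _ = (2 * m) ^ (π (2 * m) + 1) := (pow_succ' _ _).symm
  have hcount : n < π (2 * m) := by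
    have := (pow_lt_pow_iff_right₀ (by omega : 1 < 2 * m)).mp (h.trans_le hcheb)
    omega
  have := nth_lt_of_lt_count hcount
  omega

theorem two_mul_add_one_le_nth_prime (n : ℕ) : 2 * n + 1 ≤ nth Nat.Prime n := by
  induction n with
  | zero => simp [nth_prime_zero_eq_two]
  | succ n ih =>
    have hlt : nth Nat.Prime n < nth Nat.Prime (n + 1) :=
      nth_strictMono infinite_setOfPred_prime n.lt_succ_self
    obtain ⟨r, hr⟩ : Odd (nth Nat.Prime (n + 1)) :=
      (prime_nth_prime _).odd_of_ne_two (by have := (prime_nth_prime n).two_le; omega)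
    omega

theorem two_pow_mul_factorial_le_prod_nth_prime (n : ℕ) :
    2 ^ (n + 1) * n ! ≤ ∏ j ∈ range (n + 1), nth Nat.Prime j := by
  induction n with
  | zero => simp [nth_prime_zero_eq_two]
  | succ n ih =>
    rw [prod_range_succ]
    calc 2 ^ (n + 1 + 1) * (n + 1)! = 2 ^ (n + 1) * n ! * (2 * (n + 1)) := by
          rw [factorial_succ]; ring
      _ ≤ (∏ j ∈ range (n + 1), nth Nat.Prime j) * nth Nat.Prime (n + 1) :=
          Nat.mul_le_mul ih (by have := two_mul_add_one_le_nth_prime (n + 1); omega)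

theorem four_mul_pow_le_eleven_pow_mul_factorial (n : ℕ) : (4 * n) ^ n ≤ 11 ^ n * n ! := by
  have hfac : (0 : ℝ) < n ! := by exact_mod_cast factorial_pos n
  have hexp : (n : ℝ) ^ n / n ! ≤ (11 / 4) ^ n :=
    calc (n : ℝ) ^ n / n ! ≤ Real.exp n := Real.pow_div_factorial_le_exp _ n.cast_nonneg n
      _ = Real.exp 1 ^ n := by rw [← Real.exp_nat_mul, mul_one]
      _ ≤ (11 / 4) ^ n := by gcongr; linarith [Real.exp_one_lt_d9]
  suffices ((4 * n : ℕ) : ℝ) ^ n ≤ ((11 ^ n * n ! : ℕ) : ℝ) by exact_mod_cast this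
  calc ((4 * n : ℕ) : ℝ) ^ n = 4 ^ n * ((n : ℝ) ^ n / n !) * n ! := by
        push_cast; field_simp; ring
    _ ≤ 4 ^ n * (11 / 4) ^ n * n ! := by gcongr
    _ = ((11 ^ n * n ! : ℕ) : ℝ) := by push_cast; rw [← mul_pow]; norm_num

theorem two_mul_succ_sq_mul_lt_four_pow {k : ℕ} (hk : 4 ≤ k) : 2 * (k + 1) ^ 2 * k < 4 ^ k := by
  induction k, hk using Nat.le_induction with
  | base => norm_num
  | succ k hk ih =>
    calc 2 * (k + 1 + 1) ^ 2 * (k + 1) ≤ 4 * (2 * (k + 1) ^ 2 * k) := by nlinarith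
      _ < 4 * 4 ^ k := by omega
      _ = 4 ^ (k + 1) := (pow_succ' 4 k).symm

theorem sq_mul_two_pow_lt_three_pow {n : ℕ} (hn : 13 ≤ n) : n ^ 2 * 2 ^ n < 3 ^ n := by
  induction n, hn using Nat.le_induction with
  | base => norm_num
  | succ n hn ih =>
    calc (n + 1) ^ 2 * 2 ^ (n + 1) = 2 * (n + 1) ^ 2 * 2 ^ n := by ring
      _ ≤ 3 * n ^ 2 * 2 ^ n := Nat.mul_le_mul_right _ (by nlinarith)
      _ < 3 * 3 ^ n := by rw [mul_assoc]; omega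
      _ = 3 ^ (n + 1) := (pow_succ' 3 n).symm

theorem eight_mul_pow_le_eleven_pow_mul_prod_nth_prime (n : ℕ) :
    (8 * (n + 1)) ^ (n + 1) ≤ 11 ^ (n + 1) * (n + 1) * ∏ j ∈ range (n + 1), nth Nat.Prime j :=
  calc (8 * (n + 1)) ^ (n + 1) = 2 ^ (n + 1) * (4 * (n + 1)) ^ (n + 1) := by
        rw [← mul_pow, ← mul_assoc]; norm_num
    _ ≤ 2 ^ (n + 1) * (11 ^ (n + 1) * (n + 1)!) := by
        gcongr; exact_mod_cast four_mul_pow_le_eleven_pow_mul_factorial (n + 1)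
    _ = 11 ^ (n + 1) * (n + 1) * (2 ^ (n + 1) * n !) := by rw [factorial_succ]; ring
    _ ≤ 11 ^ (n + 1) * (n + 1) * ∏ j ∈ range (n + 1), nth Nat.Prime j := by
        gcongr; exact two_pow_mul_factorial_le_prod_nth_prime n

theorem nth_prime_pow_lt_sq_prod_of_le {N : ℕ} (hN : 36 ≤ N) :
    nth Nat.Prime N ^ N < (∏ j ∈ range N, nth Nat.Prime j) ^ 2 := by
  set P := ∏ j ∈ range N, nth Nat.Prime j
  set p := nth Nat.Prime N
  set k := sqrt N
  have hk : 6 ≤ k := le_sqrt.mpr hN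
  have hk2 : k ^ 2 ≤ N := sqrt_le' N
  have hN1 : N + 1 ≤ (k + 1) ^ 2 := lt_succ_sqrt' N
  have hp : p ≤ 2 * ((N + 1) * k) := by
    refine nth_prime_le_of_pow_lt (by positivity) ?_
    calc (2 * ((N + 1) * k)) ^ (N + 1) < (4 ^ k) ^ (N + 1) := by
          refine pow_lt_pow_left₀ ?_ (zero_le _) N.succ_ne_zero
          calc 2 * ((N + 1) * k) ≤ 2 * (k + 1) ^ 2 * k := by nlinarith
            _ < 4 ^ k := two_mul_succ_sq_mul_lt_four_pow (by omega)
      _ = 4 ^ ((N + 1) * k) := by rw [← pow_mul, mul_comm]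
  -- `121 = 11 ^ 2` comes from `hlow` below, and `3 / 2` absorbs the factor `N ^ 2` in `key`.
  have hB : 3 * 121 * p ≤ 2 * 64 * N ^ 2 := by nlinarith
  have hlow : (8 * N) ^ N ≤ 11 ^ N * N * P := by
    obtain ⟨n, rfl⟩ : ∃ n, N = n + 1 := ⟨N - 1, by omega⟩
    exact_mod_cast eight_mul_pow_le_eleven_pow_mul_prod_nth_prime n
  have h121 : (11 ^ N) ^ 2 = 121 ^ N := by rw [← pow_mul, mul_comm, pow_mul]; norm_num
  have key : 3 ^ N * (121 ^ N * N ^ 2 * p ^ N) < 3 ^ N * (121 ^ N * N ^ 2 * P ^ 2) :=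
    calc 3 ^ N * (121 ^ N * N ^ 2 * p ^ N) = N ^ 2 * (3 * 121 * p) ^ N := by
          rw [mul_pow, mul_pow]; ring
      _ ≤ N ^ 2 * (2 * 64 * N ^ 2) ^ N := by gcongr
      _ = N ^ 2 * 2 ^ N * (64 * N ^ 2) ^ N := by rw [mul_assoc 2, mul_pow 2]; ring
      _ < 3 ^ N * (64 * N ^ 2) ^ N := by
          gcongr; exact sq_mul_two_pow_lt_three_pow (by omega)
      _ = 3 ^ N * ((8 * N) ^ N) ^ 2 := by rw [← pow_mul, mul_comm N, pow_mul]; ring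
      _ ≤ 3 ^ N * (11 ^ N * N * P) ^ 2 := by gcongr
      _ = 3 ^ N * (121 ^ N * N ^ 2 * P ^ 2) := by rw [mul_pow, mul_pow, h121]
  exact Nat.lt_of_mul_lt_mul_left (Nat.lt_of_mul_lt_mul_left key)

theorem nth_prime_pow_lt_sq_prod_of_lt_primeCounting {n w : ℕ} (hw : n + 1 < π w)
    (h : w ^ (n + 1) < (2 ^ (n + 1) * n !) ^ 2) :
    nth Nat.Prime (n + 1) ^ (n + 1) < (∏ j ∈ range (n + 1), nth Nat.Prime j) ^ 2 :=
  calc nth Nat.Prime (n + 1) ^ (n + 1) ≤ w ^ (n + 1) :=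
        Nat.pow_le_pow_left (Nat.lt_succ_iff.mp (nth_lt_of_lt_count hw)) _
    _ < (2 ^ (n + 1) * n !) ^ 2 := h
    _ ≤ (∏ j ∈ range (n + 1), nth Nat.Prime j) ^ 2 :=
        Nat.pow_le_pow_left (two_pow_mul_factorial_le_prod_nth_prime n) 2

set_option maxRecDepth 10000 in
theorem nth_prime_pow_lt_sq_prod_of_lt {N : ℕ} (h0 : 0 < N) (hN : N < 36) :
    nth Nat.Prime N ^ N < (∏ j ∈ range N, nth Nat.Prime j) ^ 2 := by
  obtain ⟨n, rfl⟩ : ∃ n, N = n + 1 := ⟨N - 1, by omega⟩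
  have π3 : π 3 = 2 := by decide
  have π13 : π 13 = 6 := by decide
  have π19 : π 19 = 8 := by decide
  have π31 : π 31 = 11 := by decide
  have π61 : π 61 = 18 := by decide
  have π151 : π 151 = 36 := by decide
  obtain ⟨h2, h3, h4⟩ : nth Nat.Prime 2 ^ 2 < (∏ j ∈ range 2, nth Nat.Prime j) ^ 2 ∧
      nth Nat.Prime 3 ^ 3 < (∏ j ∈ range 3, nth Nat.Prime j) ^ 2 ∧
      nth Nat.Prime 4 ^ 4 < (∏ j ∈ range 4, nth Nat.Prime j) ^ 2 := by
    refine ⟨?_, ?_, ?_⟩ <;> simp [prod_range_succ, nth_prime_zero_eq_two, nth_prime_one_eq_three,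
      nth_prime_two_eq_five, nth_prime_three_eq_seven, nth_prime_four_eq_eleven]
  -- The windows of `n + 1` end at `1, 5, 7, 10, 17, 35`; on each, `w` is the prime of that index.
  have window (w : ℕ) := nth_prime_pow_lt_sq_prod_of_lt_primeCounting (n := n) (w := w)
  have hn : n < 35 := by omega
  interval_cases n
  all_goals first
    | assumption
    | exact window 3 (by omega) (by norm_num [factorial])
    | exact window 13 (by omega) (by norm_num [factorial])
    | exact window 19 (by omega) (by norm_num [factorial])
    | exact window 31 (by omega) (by norm_num [factorial])
    | exact window 61 (by omega) (by norm_num [factorial])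
    | exact window 151 (by omega) (by norm_num [factorial])

theorem nth_prime_pow_lt_sq_prod {N : ℕ} (hN : 0 < N) :
    nth Nat.Prime N ^ N < (∏ j ∈ range N, nth Nat.Prime j) ^ 2 :=
  if h : N < 36 then nth_prime_pow_lt_sq_prod_of_lt hN h
  else nth_prime_pow_lt_sq_prod_of_le (not_lt.mp h)

end Bonse

theorem stmt7 (ℓ n : ℕ) (hℓ : 1 ≤ ℓ) (hn : 2 * ℓ ≤ n) :
    (Nat.nth Nat.Prime n) ^ ℓ < ∏ j ∈ Finset.range n, Nat.nth Nat.Prime j := by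
  refine lt_of_pow_lt_pow_left₀ 2 (zero_le _) ?_
  calc (Nat.nth Nat.Prime n ^ ℓ) ^ 2 = Nat.nth Nat.Prime n ^ (2 * ℓ) := by ring
    _ ≤ Nat.nth Nat.Prime n ^ n := Nat.pow_le_pow_right (prime_nth_prime n).pos hn
    _ < (∏ j ∈ Finset.range n, Nat.nth Nat.Prime j) ^ 2 :=
        Bonse.nth_prime_pow_lt_sq_prod (by omega)
end

section
/- For every prime q₁ ≥ 17, the product of all primes p < q₁ exceeds q₁³. -/
theorem stmt8 (q : ℕ) (hq : q.Prime) (h17 : 17 ≤ q) :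
    q ^ 3 < ∏ p ∈ (Finset.range q).filter Nat.Prime, p := by
  induction q using Nat.strong_induction_on with
  | _ q ih =>
  rcases lt_or_ge q 37 with h | h
  · interval_cases q <;> revert hq <;> decide
  · obtain ⟨p, pp, hlt, hle⟩ := Nat.exists_prime_lt_and_le_two_mul ((q-1)/2) (by omega)
    have hp17 : 17 ≤ p := by omega
    have hpq : p < q := by omega
    have IH := ih p hpq pp hp17
    have hodd : q % 2 = 1 := by
      rcases hq.eq_two_or_odd with h2 | h2 <;> omega
    have hq2 : q + 1 ≤ 2 * p := by omega
    have key : p * ∏ r ∈ (Finset.range p).filter Nat.Prime, r ≤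
        ∏ r ∈ (Finset.range q).filter Nat.Prime, r := by
      have hpnot : p ∉ (Finset.range p).filter Nat.Prime := by simp
      rw [show p * ∏ r ∈ (Finset.range p).filter Nat.Prime, r =
        ∏ r ∈ insert p ((Finset.range p).filter Nat.Prime), r from
        (Finset.prod_insert (f := fun r => r) hpnot).symm]
      apply Finset.prod_le_prod_of_subset_of_one_le'
      · intro x hx
        simp only [Finset.mem_insert, Finset.mem_filter, Finset.mem_range] at hx ⊢
        rcases hx with rfl | ⟨hx1, hx2⟩
        · exact ⟨hpq, pp⟩
        · exact ⟨hx1.trans hpq, hx2⟩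
      · intro x hx _
        exact ((Finset.mem_filter.mp hx).2).one_lt.le
    have e0 : 37 * q ^ 3 ≤ q ^ 4 := by
      calc 37 * q ^ 3 ≤ q * q ^ 3 := Nat.mul_le_mul_right _ h
        _ = q ^ 4 := by ring
    have e1 : 16 * q ^ 3 < (q + 1) ^ 4 := by
      have hq3 : 0 < q ^ 3 := by positivity
      by_contra hc
      push_neg at hc
      zify at e0 hq3 hc
      nlinarith [sq_nonneg (q:ℤ), (by positivity : (0:ℤ) ≤ q)]
    have e2 : (q + 1) ^ 4 ≤ (2 * p) ^ 4 := Nat.pow_le_pow_left hq2 4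
    have h1 : q ^ 3 < p ^ 4 := by
      have ey : (2 * p) ^ 4 = 16 * p ^ 4 := by ring
      linarith
    have h2 : p ^ 4 < p * ∏ r ∈ (Finset.range p).filter Nat.Prime, r := by
      have e3 : p ^ 4 = p * p ^ 3 := by ring
      rw [e3]
      exact mul_lt_mul_of_pos_left IH pp.pos
    exact h1.trans (h2.trans_le key)
end

section
/- For every prime q₁ ≥ 31, the product of all primes p < q₁ exceeds q₁⁵. -/
theorem stmt9 (q : ℕ) (hq : q.Prime) (h31 : 31 ≤ q) :
    q ^ 5 < ∏ p ∈ (Finset.range q).filter Nat.Prime, p := by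
  induction q using Nat.strong_induction_on with
  | _ q ih =>
    by_cases hq63 : q < 63
    · interval_cases q <;> revert hq <;> decide
    · push_neg at hq63
      obtain ⟨p, hp, hlt, hle⟩ := Nat.exists_prime_lt_and_le_two_mul ((q - 1) / 2) (by omega)
      have hpq : p < q := by omega
      have hq2p : q ≤ 2 * p := by omega
      have hp37 : 37 ≤ p := by
        rcases Nat.lt_or_ge p 37 with h | h
        · interval_cases p <;> first | omega | (revert hp; decide)
        · exact h
      have hIH := ih p hpq hp (by omega)
      -- subset
      have hsub : insert p ((Finset.range p).filter Nat.Prime) ⊆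
          (Finset.range q).filter Nat.Prime := by
        intro x hx
        simp only [Finset.mem_insert, Finset.mem_filter, Finset.mem_range] at hx ⊢
        rcases hx with rfl | ⟨h1, h2⟩
        · exact ⟨hpq, hp⟩
        · exact ⟨h1.trans hpq, h2⟩
      have hnotmem : p ∉ (Finset.range p).filter Nat.Prime := by
        simp
      have hle2 : p * ∏ x ∈ (Finset.range p).filter Nat.Prime, x ≤
          ∏ x ∈ (Finset.range q).filter Nat.Prime, x := by
        calc p * ∏ x ∈ (Finset.range p).filter Nat.Prime, x
            = ∏ x ∈ insert p ((Finset.range p).filter Nat.Prime), x :=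
              (Finset.prod_insert (f := id) hnotmem).symm
          _ ≤ _ := by
              refine Finset.prod_le_prod_of_subset_of_one_le' hsub ?_
              intro i hi _
              exact (Finset.mem_filter.mp hi).2.one_lt.le
      calc q ^ 5 ≤ (2 * p) ^ 5 := Nat.pow_le_pow_left hq2p 5
        _ < p * p ^ 5 := by have := pow_pos (show 0 < p by omega) 5; nlinarith
        _ ≤ p * ∏ x ∈ (Finset.range p).filter Nat.Prime, x := by
            exact Nat.mul_le_mul_left p hIH.le
        _ ≤ _ := hle2
end

section
/- Let D ≡ 0 or 1 (mod 4) be a non-square integer, and let q₁ < q₂ < ⋯ be all primes with Kronecker symbol (D/q) = -1. If n₀ is the turning index of D and n₀ is odd, then for all i ≥ n₀ + 2 one has |D| + q_{i+1} ≤ q₁q₂⋯q_i. -/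
/-!
Let `χ` be the Kronecker character of `D`: it is completely multiplicative, equals `(D/q)` at
primes and satisfies `χ(a + |D|) = χ(a)` for `a > 0`. For odd `k` with `|D| < Q_k`, both
`Q_k - |D|` and `Q_k + |D|` have `χ = χ(Q_k) = (-1)^k = -1`, so each has a prime factor in `P(D)`.
Such a factor does not divide `|D|`, hence not `Q_k`, hence it is some `q_j` with `j ≥ k`.
This bounds `q_k` by `Q_k - |D|`, and `q_{k+1}` either by `Q_k - |D|` or, when that factor is
`q_k` itself, by `Q_k + |D| ≤ Q_{k+1} - |D|` (as `q_k ≥ 3`). Every `i ≥ n₀ + 2` is `k` or `k + 1`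
for such a `k`. The same mechanism applied to `q₀ M ^ (2|D|) - |D|`, with `M` the product of a
putatively finite `P(D)`, shows that `P(D)` is infinite.
-/

open Finset Nat NumberTheorySymbols

theorem MonoidWithZeroHom.exists_prime_dvd_of_map_eq_neg_one (f : ℕ →*₀ ℤ) {n : ℕ}
    (hn : f n = -1) : ∃ p, p.Prime ∧ p ∣ n ∧ f p = -1 := by
  induction n using Nat.recOnMul with
  | zero => simp at hn
  | one => simp at hn
  | prime p hp => exact ⟨p, hp, dvd_rfl, hn⟩
  | mul a b ha hb =>
    rw [map_mul] at hn
    rcases Int.eq_one_or_neg_one_of_mul_eq_neg_one' hn with ⟨-, hb'⟩ | ⟨ha', -⟩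
    · obtain ⟨p, hp, hpb, hfp⟩ := hb hb'
      exact ⟨p, hp, hpb.mul_left a, hfp⟩
    · obtain ⟨p, hp, hpa, hfp⟩ := ha ha'
      exact ⟨p, hp, hpa.mul_right b, hfp⟩

namespace Nat

variable {p : ℕ → Prop} {r k : ℕ}

theorem le_count_of_not_dvd_prod_nth [DecidablePred p] (hr : p r)
    (h : ¬ r ∣ ∏ j ∈ range k, nth p j) : k ≤ count p r := by
  by_contra! hlt
  exact h (nth_count hr ▸ dvd_prod_of_mem _ (mem_range.2 hlt))

theorem nth_le_of_not_dvd_prod_nth (hp : {n | p n}.Infinite) (hr : p r)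
    (h : ¬ r ∣ ∏ j ∈ range k, nth p j) : nth p k ≤ r := by
  classical
  exact nth_count hr ▸ (nth_le_nth hp).2 (le_count_of_not_dvd_prod_nth hr h)

theorem nth_succ_le_of_not_dvd_prod_nth (hp : {n | p n}.Infinite) (hr : p r)
    (h : ¬ r ∣ ∏ j ∈ range k, nth p j) (hne : r ≠ nth p k) : nth p (k + 1) ≤ r := by
  classical
  refine nth_count hr ▸ (nth_le_nth hp).2 ((le_count_of_not_dvd_prod_nth hr h).lt_of_ne ?_)
  rintro rfl
  exact hne (nth_count hr).symm

end Nat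

/-- For `D ≡ 0 (mod 4)` this is `(D/n)`, for `D ≡ 1 (mod 4)` it is `(n/|D|)`; by quadratic
reciprocity both agree with `kron D` at primes. The value `0` at `0` makes it multiplicative. -/
def kronChar (D : ℤ) : ℕ →*₀ ℤ where
  toFun n := if n = 0 then 0 else if D % 4 = 0 then J(D | n) else J(n | D.natAbs)
  map_zero' := if_pos rfl
  map_one' := by simp
  map_mul' m n := by
    rcases eq_or_ne m 0 with rfl | hm
    · simp
    rcases eq_or_ne n 0 with rfl | hn
    · simp
    simp only [mul_ne_zero hm hn, hm, hn, if_false]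
    split_ifs
    · exact jacobiSym.mul_right' D hm hn
    · push_cast
      exact jacobiSym.mul_left _ _ _

theorem not_dvd_natAbs_of_kron_eq_neg_one {D : ℤ} {p : ℕ} (hp : p.Prime) (h : kron D p = -1) :
    ¬ p ∣ D.natAbs := by
  intro hpD
  rcases eq_or_ne p 2 with rfl | hp2
  · have : D % 8 = 5 := by unfold kron at h; split_ifs at h <;> omega
    omega
  · have := Fact.mk hp
    have : J(D | p) = 0 := by
      rw [jacobiSym.eq_zero_iff_not_coprime, Int.gcd, Int.natAbs_natCast, Nat.gcd_eq_right hpD]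
      exact hp.ne_one
    simp [kron, hp2, this] at h

theorem kronChar_apply {D : ℤ} {n : ℕ} (hn : n ≠ 0) :
    kronChar D n = if D % 4 = 0 then J(D | n) else J(n | D.natAbs) :=
  if_neg hn

theorem kronChar_prime {D : ℤ} (hD : D % 4 = 0 ∨ D % 4 = 1) {p : ℕ} (hp : p.Prime) :
    kronChar D p = kron D p := by
  rw [kronChar_apply hp.ne_zero]
  rcases hD with hD | hD
  · rw [if_pos hD]
    rcases eq_or_ne p 2 with rfl | hp2
    · have := Fact.mk hp
      rw [← jacobiSym.legendreSym.to_jacobiSym, legendreSym.eq_zero_iff 2 D |>.2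
        ((ZMod.intCast_zmod_eq_zero_iff_dvd D 2).2 (by omega))]
      rcases (by omega : D % 8 = 0 ∨ D % 8 = 4) with h8 | h8 <;> simp [kron, h8]
    · simp [kron, hp2]
  rw [if_neg (by omega)]
  obtain ⟨d, rfl | rfl⟩ := Int.eq_nat_or_neg D
  all_goals
    have hd : Odd d := Nat.odd_iff.2 (by omega)
    simp only [Int.natAbs_neg, Int.natAbs_natCast]
  · rcases eq_or_ne p 2 with rfl | hp2
    · rw [Nat.cast_ofNat, jacobiSym.at_two hd, ZMod.χ₈_nat_eq_if_mod_eight]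
      rcases (by omega : d % 8 = 1 ∨ d % 8 = 5) with h8 | h8 <;> simp [kron, h8] <;> omega
    · rw [show kron d p = J(d | p) from if_neg hp2]
      exact (jacobiSym.quadratic_reciprocity_one_mod_four (by omega) (hp.odd_of_ne_two hp2)).symm
  · rcases eq_or_ne p 2 with rfl | hp2
    · rw [Nat.cast_ofNat, jacobiSym.at_two hd, ZMod.χ₈_nat_eq_if_mod_eight]
      rcases (by omega : d % 8 = 3 ∨ d % 8 = 7) with h8 | h8 <;> simp [kron, h8] <;> omega
    · have hpodd : Odd p := hp.odd_of_ne_two hp2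
      rw [show kron (-d) p = J(-d | p) from if_neg hp2, jacobiSym.neg _ hpodd]
      rcases Nat.odd_mod_four_iff.1 (Nat.odd_iff.1 hpodd) with h | h
      · rw [ZMod.χ₄_nat_one_mod_four h, one_mul]
        exact (jacobiSym.quadratic_reciprocity_one_mod_four' hd h).symm
      · rw [ZMod.χ₄_nat_three_mod_four h,
          jacobiSym.quadratic_reciprocity_three_mod_four (by omega) h]
        ring

theorem kronChar_add_natAbs {D : ℤ} (hD : D % 4 = 0 ∨ D % 4 = 1) {a : ℕ} (ha : a ≠ 0) :
    kronChar D (a + D.natAbs) = kronChar D a := by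
  rw [kronChar_apply ha, kronChar_apply (by omega)]
  rcases hD with hD | hD
  · simp only [if_pos hD]
    have hd : Even D.natAbs := Int.natAbs_even.2 (Int.even_iff.2 (by omega))
    rcases Nat.even_or_odd a with ha2 | ha2
    · have hz : ∀ b : ℕ, b ≠ 0 → Even b → J(D | b) = 0 := by
        intro b hb0 hb
        have := NeZero.mk hb0
        rw [jacobiSym.eq_zero_iff_not_coprime]
        intro h1
        have h2 : (2 : ℤ) ∣ Int.gcd D b :=
          Int.dvd_coe_gcd (by omega) (Int.natCast_dvd_natCast.2 (even_iff_two_dvd.1 hb))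
        omega
      rw [hz _ (by omega) (ha2.add hd), hz a ha ha2]
    · have hr : ∀ b : ℕ, Odd b → J(D | b) = J(D / 4 | b % D.natAbs) := by
        intro b hb
        obtain ⟨c, rfl⟩ := Int.dvd_of_emod_eq_zero hD
        rw [← jacobiSym.div_four_left hD (Nat.odd_iff.1 hb),
          Int.mul_ediv_cancel_left _ (by norm_num), jacobiSym.mod_right _ hb, Int.natAbs_mul]
        rfl
      rw [hr _ (ha2.add_even hd), hr a ha2, Nat.add_mod_right]
  · simp only [if_neg (by omega : ¬ D % 4 = 0)]
    exact jacobiSym.mod_left' (by rw [Nat.cast_add, Int.add_emod_right])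

def kronNegPrime (D : ℤ) (q : ℕ) : Prop := q.Prime ∧ kron D q = -1

section

variable {D : ℤ}

theorem exists_kronNegPrime_dvd (hD : D % 4 = 0 ∨ D % 4 = 1) {a : ℕ} (ha : kronChar D a = -1) :
    ∃ r, kronNegPrime D r ∧ r ∣ a := by
  obtain ⟨r, hr, hra, hχ⟩ := (kronChar D).exists_prime_dvd_of_map_eq_neg_one ha
  exact ⟨r, ⟨hr, kronChar_prime hD hr ▸ hχ⟩, hra⟩

theorem kronChar_sub_natAbs (hD : D % 4 = 0 ∨ D % 4 = 1) {N : ℕ} (hN : D.natAbs < N) :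
    kronChar D (N - D.natAbs) = kronChar D N := by
  conv_rhs => rw [← Nat.sub_add_cancel hN.le]
  exact (kronChar_add_natAbs hD (by omega)).symm

theorem kronNegPrime_infinite (hD : D % 4 = 0 ∨ D % 4 = 1) (hne : ∃ q, kronNegPrime D q) :
    {q | kronNegPrime D q}.Infinite := by
  intro hfin
  obtain ⟨q₀, hq₀⟩ := hne
  set d := D.natAbs
  set M := ∏ r ∈ hfin.toFinset, r
  have hM : ∀ r, kronNegPrime D r → r ∣ M := fun r hr =>
    dvd_prod_of_mem _ (hfin.mem_toFinset.2 hr)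
  have hχM : kronChar D M ^ 2 = 1 := by
    rw [map_prod, ← prod_pow]
    refine prod_eq_one fun r hr => ?_
    obtain ⟨hr, hχr⟩ := hfin.mem_toFinset.1 hr
    rw [kronChar_prime hD hr, hχr]
    norm_num
  have hM2 : 2 ≤ M := hq₀.1.two_le.trans
    (Nat.le_of_dvd (prod_pos fun r hr => (hfin.mem_toFinset.1 hr).1.pos) (hM q₀ hq₀))
  have hd0 : d ≠ 0 := fun h => not_dvd_natAbs_of_kron_eq_neg_one hq₀.1 hq₀.2
    (by rw [show D.natAbs = 0 from h]; exact dvd_zero q₀)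
  -- `χ(N - d) = χ(q₀) = -1` puts a prime of `P(D)` into `N - d`, but every prime of `P(D)`
  -- divides `N` and none divides `d`.
  set N := q₀ * M ^ (2 * d)
  have hdN : d < N := calc
    d < 2 ^ (2 * d) := d.lt_two_pow_self.trans_le (Nat.pow_le_pow_right two_pos (by omega))
    _ ≤ M ^ (2 * d) := Nat.pow_le_pow_left hM2 _
    _ ≤ N := Nat.le_mul_of_pos_left _ hq₀.1.pos
  have hχN : kronChar D (N - d) = -1 := by
    rw [kronChar_sub_natAbs hD hdN, map_mul, map_pow, pow_mul, hχM, one_pow, mul_one,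
      kronChar_prime hD hq₀.1, hq₀.2]
  obtain ⟨r, hr, hrN⟩ := exists_kronNegPrime_dvd hD hχN
  have hrM : r ∣ N := ((hM r hr).trans (dvd_pow_self _ (by omega))).mul_left _
  have := Nat.dvd_sub hrM hrN
  rw [Nat.sub_sub_self hdN.le] at this
  exact not_dvd_natAbs_of_kron_eq_neg_one hr.1 hr.2 this

theorem kronChar_prod_nth (hD : D % 4 = 0 ∨ D % 4 = 1) (hinf : {q | kronNegPrime D q}.Infinite)
    (k : ℕ) : kronChar D (∏ j ∈ range k, nth (kronNegPrime D) j) = (-1) ^ k := by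
  rw [map_prod, prod_congr rfl fun j _ => ?_, prod_const, card_range]
  obtain ⟨hq, hχq⟩ := nth_mem_of_infinite hinf j
  rw [kronChar_prime hD hq, hχq]

theorem not_dvd_prod_nth_of_dvd {r a k : ℕ} (hr : kronNegPrime D r) (hra : r ∣ a)
    (h : a + D.natAbs = ∏ j ∈ range k, nth (kronNegPrime D) j ∨
      ∏ j ∈ range k, nth (kronNegPrime D) j + D.natAbs = a) :
    ¬ r ∣ ∏ j ∈ range k, nth (kronNegPrime D) j := by
  intro hrQ
  apply not_dvd_natAbs_of_kron_eq_neg_one hr.1 hr.2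
  rcases h with h | h
  · exact (Nat.dvd_add_right hra).1 (h ▸ hrQ)
  · exact (Nat.dvd_add_right hrQ).1 (h ▸ hra)

theorem natAbs_add_nth_le_prod_nth (hD : D % 4 = 0 ∨ D % 4 = 1)
    (hinf : {q | kronNegPrime D q}.Infinite) {k : ℕ} (hk : Odd k)
    (hdk : D.natAbs < ∏ j ∈ range k, nth (kronNegPrime D) j) :
    D.natAbs + nth (kronNegPrime D) k ≤ ∏ j ∈ range k, nth (kronNegPrime D) j := by
  set Q := ∏ j ∈ range k, nth (kronNegPrime D) j
  have hχ : kronChar D (Q - D.natAbs) = -1 := by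
    rw [kronChar_sub_natAbs hD hdk, kronChar_prod_nth hD hinf, hk.neg_one_pow]
  obtain ⟨r, hr, hrB⟩ := exists_kronNegPrime_dvd hD hχ
  have hqr := nth_le_of_not_dvd_prod_nth hinf hr
    (not_dvd_prod_nth_of_dvd hr hrB (Or.inl (Nat.sub_add_cancel hdk.le)))
  have := Nat.le_of_dvd (by omega) hrB
  omega

theorem natAbs_add_nth_succ_le_prod_nth (hD : D % 4 = 0 ∨ D % 4 = 1)
    (hinf : {q | kronNegPrime D q}.Infinite) {k : ℕ} (hk : Odd k)
    (hdk : D.natAbs < ∏ j ∈ range k, nth (kronNegPrime D) j) :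
    D.natAbs + nth (kronNegPrime D) (k + 1) ≤ ∏ j ∈ range (k + 1), nth (kronNegPrime D) j := by
  rw [prod_range_succ]
  set Q := ∏ j ∈ range k, nth (kronNegPrime D) j
  set d := D.natAbs
  have hq3 : 3 ≤ nth (kronNegPrime D) k :=
    (nth_mem_of_infinite hinf 0).1.two_le.trans_lt (nth_strictMono hinf hk.pos)
  have hχ : kronChar D (Q - d) = -1 := by
    rw [kronChar_sub_natAbs hD hdk, kronChar_prod_nth hD hinf, hk.neg_one_pow]
  obtain ⟨r, hr, hrB⟩ := exists_kronNegPrime_dvd hD hχ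
  by_cases hrk : r = nth (kronNegPrime D) k
  · have hχ' : kronChar D (Q + d) = -1 := by
      rw [kronChar_add_natAbs hD (by omega), kronChar_prod_nth hD hinf, hk.neg_one_pow]
    obtain ⟨r', hr', hrC⟩ := exists_kronNegPrime_dvd hD hχ'
    -- `q k` divides `Q - d`, so it cannot also divide `Q + d = (Q - d) + 2 d`.
    have hne : r' ≠ nth (kronNegPrime D) k := by
      intro hr'k
      have h2d : r' ∣ 2 * d := by
        rw [show Q + d = Q - d + 2 * d by omega] at hrC
        exact (Nat.dvd_add_right (hr'k ▸ hrk ▸ hrB)).1 hrC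
      rcases (Nat.Prime.dvd_mul hr'.1).1 h2d with h2 | h2
      · have := Nat.le_of_dvd two_pos h2
        omega
      · exact not_dvd_natAbs_of_kron_eq_neg_one hr'.1 hr'.2 h2
    have hqr := nth_succ_le_of_not_dvd_prod_nth hinf hr'
      (not_dvd_prod_nth_of_dvd hr' hrC (Or.inr rfl)) hne
    have := Nat.le_of_dvd (by omega) hrC
    have := Nat.mul_le_mul_left Q hq3
    omega
  · have hqr := nth_succ_le_of_not_dvd_prod_nth hinf hr
      (not_dvd_prod_nth_of_dvd hr hrB (Or.inl (Nat.sub_add_cancel hdk.le))) hrk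
    have := Nat.le_of_dvd (by omega) hrB
    have := Nat.mul_le_mul_left Q hq3
    omega

end

theorem stmt13_general (D : ℤ) (hD : D % 4 = 0 ∨ D % 4 = 1)
    (d : ℕ) (hd : d = D.natAbs) (n₀ : ℕ)
    (hgt : d < ∏ j ∈ Finset.range (n₀ + 1), Nat.nth (fun q => q.Prime ∧ kron D q = -1) j) :
    ∀ i : ℕ, n₀ + 2 ≤ i →
      d + Nat.nth (fun q => q.Prime ∧ kron D q = -1) i ≤
        ∏ j ∈ Finset.range i, Nat.nth (fun q => q.Prime ∧ kron D q = -1) j := by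
  subst hd
  change D.natAbs < ∏ j ∈ range (n₀ + 1), nth (kronNegPrime D) j at hgt
  have hq₀ : nth (kronNegPrime D) 0 ≠ 0 := fun h => by
    rw [prod_eq_zero (mem_range.2 n₀.succ_pos) h] at hgt
    omega
  have hinf := kronNegPrime_infinite hD ⟨_, nth_mem_of_ne_zero hq₀⟩
  intro i hi
  obtain ⟨k, hk, hnk, hki⟩ : ∃ k, Odd k ∧ n₀ + 1 ≤ k ∧ (k = i ∨ k + 1 = i) := by
    rcases Nat.even_or_odd i with hi2 | hi2
    · exact ⟨i - 1, Nat.Even.sub_odd (by omega) hi2 odd_one, by omega, Or.inr (by omega)⟩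
    · exact ⟨i, hi2, by omega, Or.inl rfl⟩
  have hdk : D.natAbs < ∏ j ∈ range k, nth (kronNegPrime D) j :=
    hgt.trans_le (prod_le_prod_of_subset_of_one_le' (range_subset_range.2 hnk)
      fun j _ _ => (nth_mem_of_infinite hinf j).1.one_lt.le)
  rcases hki with rfl | rfl
  · exact natAbs_add_nth_le_prod_nth hD hinf hk hdk
  · exact natAbs_add_nth_succ_le_prod_nth hD hinf hk hdk

theorem stmt13 (D : ℤ) (hD : D % 4 = 0 ∨ D % 4 = 1) (hns : ¬ IsSquare D)
    (d : ℕ) (hd : d = D.natAbs) (n₀ : ℕ) (hn₀ : 1 ≤ n₀)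
    (hlt : (∏ j ∈ Finset.range n₀, Nat.nth (fun q => q.Prime ∧ kron D q = -1) j) < d)
    (hgt : d < ∏ j ∈ Finset.range (n₀ + 1), Nat.nth (fun q => q.Prime ∧ kron D q = -1) j)
    (hodd : Odd n₀) :
    ∀ i : ℕ, n₀ + 2 ≤ i →
      d + Nat.nth (fun q => q.Prime ∧ kron D q = -1) i ≤
        ∏ j ∈ Finset.range i, Nat.nth (fun q => q.Prime ∧ kron D q = -1) j :=
  stmt13_general D hD d hd n₀ hgt
end

section
/- For D = -4, letting q₁ < q₂ < ⋯ be the primes congruent to 3 mod 4 (i.e., primes q with Kronecker symbol (-4/q) = -1), the inequality q_{i+1} < q₁q₂⋯q_i holds for all i ≥ 3. -/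
open Finset

theorem Nat.nth_le_of_forall_nth_ne {p : ℕ → Prop} [DecidablePred p] {i q : ℕ} (hq : p q)
    (h : ∀ j < i, Nat.nth p j ≠ q) : Nat.nth p i ≤ q := by
  have hi : i ≤ Nat.count p q := by
    by_contra! hlt
    exact h _ hlt (Nat.nth_count hq)
  calc Nat.nth p i ≤ Nat.nth p (Nat.count p q) :=
        Nat.nth_le_nth' hi fun hf => Nat.count_lt_card hf hq
    _ = q := Nat.nth_count hq

theorem Nat.mod_four_eq_three_or_of_mul {a b : ℕ} (h : a * b % 4 = 3) :
    a % 4 = 3 ∨ b % 4 = 3 := by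
  rw [Nat.mul_mod] at h
  have ha := Nat.mod_lt a (show 4 > 0 by norm_num)
  have hb := Nat.mod_lt b (show 4 > 0 by norm_num)
  interval_cases a % 4 <;> interval_cases b % 4 <;> simp_all

theorem Nat.exists_prime_mod_four_eq_three_dvd {n : ℕ} (hn : n % 4 = 3) :
    ∃ q, q.Prime ∧ q % 4 = 3 ∧ q ∣ n := by
  induction n using Nat.recOnMul with
  | zero => simp at hn
  | one => simp at hn
  | prime p hp => exact ⟨p, hp, hn, dvd_rfl⟩
  | mul a b iha ihb =>
    rcases Nat.mod_four_eq_three_or_of_mul hn with ha | hb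
    · obtain ⟨q, hq, hq3, hqa⟩ := iha ha
      exact ⟨q, hq, hq3, hqa.mul_right b⟩
    · obtain ⟨q, hq, hq3, hqb⟩ := ihb hb
      exact ⟨q, hq, hq3, hqb.mul_left a⟩

/-- Euclid's argument: one of `P - 2`, `P - 4` is `3 mod 4`, and its prime factors are odd
and do not divide `P`. -/
theorem Nat.exists_prime_mod_four_eq_three_lt_not_dvd {P : ℕ} (hP : Odd P) (h5 : 5 ≤ P) :
    ∃ q, q.Prime ∧ q % 4 = 3 ∧ q < P ∧ ¬ q ∣ P := by
  obtain ⟨k, hk, hN⟩ : ∃ k, 2 ^ k < P ∧ (P - 2 ^ k) % 4 = 3 := by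
    rcases Nat.odd_mod_four_iff.mp (Nat.odd_iff.mp hP) with h | h
    · exact ⟨1, by omega, by omega⟩
    · exact ⟨2, by omega, by omega⟩
  obtain ⟨q, hq, hq3, hqN⟩ := Nat.exists_prime_mod_four_eq_three_dvd hN
  refine ⟨q, hq, hq3, (Nat.le_of_dvd (by omega) hqN).trans_lt
    (Nat.sub_lt (by omega) (by positivity)), fun hqP => ?_⟩
  have hq2 : q ∣ 2 := by
    have := Nat.dvd_sub hqP hqN
    rw [Nat.sub_sub_self hk.le] at this
    exact hq.dvd_of_dvd_pow this
  have := (Nat.prime_dvd_prime_iff_eq hq Nat.prime_two).mp hq2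
  omega

theorem stmt15 :
    ∀ i : ℕ, 3 ≤ i →
      Nat.nth (fun q => q.Prime ∧ q % 4 = 3) i <
        ∏ j ∈ Finset.range i, Nat.nth (fun q => q.Prime ∧ q % 4 = 3) j := by
  intro i hi
  set p : ℕ → Prop := fun q => q.Prime ∧ q % 4 = 3
  have hinf : (Set.ofPred p).Infinite :=
    Nat.infinite_setOfPred_prime_and_modEq (q := 4) (a := 3) (by norm_num) (by norm_num)
  have hmem (j : ℕ) : p (Nat.nth p j) := Nat.nth_mem_of_infinite hinf j
  set P := ∏ j ∈ range i, Nat.nth p j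
  have hodd : Odd P := prod_induction _ Odd (fun _ _ => Odd.mul) odd_one
    fun j _ => Nat.odd_iff.mpr (Nat.odd_of_mod_four_eq_three (hmem j).2)
  have h5 : 5 ≤ P :=
    calc 5 ≤ 3 ^ i := le_trans (by norm_num) (Nat.pow_le_pow_right (by norm_num) hi)
      _ ≤ P := by
        simpa using pow_card_le_prod (range i) (Nat.nth p) 3 fun j _ => by
          have := (hmem j).2; omega
  obtain ⟨q, hq, hq3, hqP, hqndvd⟩ := Nat.exists_prime_mod_four_eq_three_lt_not_dvd hodd h5
  have hnew : ∀ j < i, Nat.nth p j ≠ q := fun j hj heq =>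
    hqndvd (heq ▸ dvd_prod_of_mem _ (mem_range.mpr hj))
  exact (Nat.nth_le_of_forall_nth_ne ⟨hq, hq3⟩ hnew).trans_lt hqP
end

section
/- For D = -12, letting q₁ < q₂ < ⋯ be the primes q with Kronecker symbol (-12/q) = -1 (equivalently, the primes ≡ -1 mod 6; here q₁ = 5, q₂ = 11, q₃ = 17, …), the inequality q_{i+1} < q₁q₂⋯q_i holds for all i ≥ 2. -/
private lemma ex5 : ∀ M : ℕ, M % 6 = 5 → ∃ p, p.Prime ∧ p % 6 = 5 ∧ p ∣ M := by
  intro M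
  induction M using Nat.strong_induction_on with
  | _ M ih =>
    intro hM
    obtain ⟨p, pp, pdvd⟩ := Nat.exists_prime_and_dvd (show M ≠ 1 by omega)
    have hp2 : p ≠ 2 := by
      rintro rfl
      have := Nat.dvd_iff_mod_eq_zero.mp pdvd
      omega
    have hp3 : p ≠ 3 := by
      rintro rfl
      have := Nat.dvd_iff_mod_eq_zero.mp pdvd
      omega
    have hodd : p % 2 = 1 := Nat.odd_iff.mp (pp.odd_of_ne_two hp2)
    have h3 : p % 3 ≠ 0 := by
      intro h
      exact hp3 ((Nat.prime_dvd_prime_iff_eq Nat.prime_three pp).mp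
        (Nat.dvd_iff_mod_eq_zero.mpr h)).symm
    have hp6 : p % 6 = 1 ∨ p % 6 = 5 := by omega
    rcases hp6 with h1 | h5
    · obtain ⟨M', rfl⟩ := pdvd
      have hM'6 : M' % 6 = 5 := by
        have := Nat.mul_mod p M' 6
        rw [h1] at this
        omega
      have hlt : M' < p * M' := by
        have hp1 : 1 < p := pp.one_lt
        have hM'pos : 0 < M' := by
          rcases Nat.eq_zero_or_pos M' with h | h
          · omega
          · exact h
        calc M' = 1 * M' := (one_mul M').symm
        _ < p * M' := (Nat.mul_lt_mul_right hM'pos).mpr hp1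
      obtain ⟨q, hq, hq6, hqd⟩ := ih M' hlt hM'6
      exact ⟨q, hq, hq6, hqd.mul_left p⟩
    · exact ⟨p, pp, h5, pdvd⟩

private lemma inf5 : {q : ℕ | Nat.Prime q ∧ q % 6 = 5}.Infinite := by
  apply Set.infinite_of_not_bddAbove
  rintro ⟨n, hn⟩
  have hfac : 6 ≤ 6 * (n + 1).factorial := by
    have := Nat.factorial_pos (n + 1); omega
  have hM : (6 * (n + 1).factorial - 1) % 6 = 5 := by omega
  obtain ⟨p, pp, hp6, hpd⟩ := ex5 _ hM
  have hple : p ≤ n := hn ⟨pp, hp6⟩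
  have hd1 : p ∣ 6 * (n + 1).factorial :=
    Dvd.dvd.mul_left (Nat.dvd_factorial pp.pos (by omega)) 6
  have hd : p ∣ 6 * (n + 1).factorial - (6 * (n + 1).factorial - 1) :=
    Nat.dvd_sub hd1 hpd
  have he : 6 * (n + 1).factorial - (6 * (n + 1).factorial - 1) = 1 := by omega
  rw [he] at hd
  exact pp.one_lt.ne' (Nat.dvd_one.mp hd)

theorem stmt16 :
    ∀ i : ℕ, 2 ≤ i →
      Nat.nth (fun q => q.Prime ∧ q % 6 = 5) i <
        ∏ j ∈ Finset.range i, Nat.nth (fun q => q.Prime ∧ q % 6 = 5) j := by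
  intro i hi
  set P : ℕ → Prop := fun q => q.Prime ∧ q % 6 = 5 with hP
  have hinf : (setOf P).Infinite := inf5
  set N := ∏ j ∈ Finset.range i, Nat.nth P j with hN
  have hmem : ∀ j, P (Nat.nth P j) := Nat.nth_mem_of_infinite hinf
  have hge5 : ∀ j, 5 ≤ Nat.nth P j := by
    intro j
    have h := (hmem j).2
    omega
  have hN25 : 25 ≤ N := by
    have hsub : Finset.range 2 ⊆ Finset.range i := Finset.range_subset_range.mpr hi
    have h2 : 25 ≤ ∏ j ∈ Finset.range 2, Nat.nth P j := by
      rw [Finset.prod_range_succ, Finset.prod_range_one]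
      have := hge5 0; have := hge5 1
      nlinarith
    calc 25 ≤ ∏ j ∈ Finset.range 2, Nat.nth P j := h2
    _ ≤ N := Finset.prod_le_prod_of_subset_of_one_le' hsub
        (fun j _ _ => by have := hge5 j; omega)
  have hcopj : ∀ j, Nat.Coprime 6 (Nat.nth P j) := by
    intro j
    have h6 := (hmem j).2
    unfold Nat.Coprime
    rw [Nat.gcd_rec, h6]
    decide
  have hcop : Nat.Coprime 6 N :=
    Nat.Coprime.prod_right (fun j _ => hcopj j)
  have hN2 : ¬ 2 ∣ N := fun h =>
    by have : (2:ℕ) ∣ 1 := hcop ▸ Nat.dvd_gcd ⟨3, rfl⟩ h; omega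
  have hN3 : ¬ 3 ∣ N := fun h =>
    by have : (3:ℕ) ∣ 1 := hcop ▸ Nat.dvd_gcd ⟨2, rfl⟩ h; omega
  have hN2' : N % 2 ≠ 0 := fun h => hN2 (Nat.dvd_iff_mod_eq_zero.mpr h)
  have hN3' : N % 3 ≠ 0 := fun h => hN3 (Nat.dvd_iff_mod_eq_zero.mpr h)
  have hN6 : N % 6 = 1 ∨ N % 6 = 5 := by omega
  obtain ⟨M, hM6, hNM, hMlt⟩ :
      ∃ M, M % 6 = 5 ∧ (N - M = 2 ∨ N - M = 6) ∧ M < N := by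
    rcases hN6 with h | h
    · exact ⟨N - 2, by omega, by omega, by omega⟩
    · exact ⟨N - 6, by omega, by omega, by omega⟩
  obtain ⟨p, pp, hp6, hpd⟩ := ex5 M hM6
  have hp5 : 5 ≤ p := by
    have h2 := pp.two_le
    omega
  have hpne : ∀ j < i, p ≠ Nat.nth P j := by
    intro j hj heq
    have hdN : p ∣ N := heq ▸ Finset.dvd_prod_of_mem _ (Finset.mem_range.mpr hj)
    have hdd : p ∣ N - M := Nat.dvd_sub hdN hpd
    rcases hNM with h | h
    · rw [h] at hdd; have := Nat.le_of_dvd (by norm_num) hdd; omega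
    · rw [h] at hdd
      have hle := Nat.le_of_dvd (by norm_num) hdd
      have hpe : p = 5 := by omega
      rw [hpe] at hdd
      norm_num at hdd
  classical
  have hpc : Nat.nth P (Nat.count P p) = p := Nat.nth_count ⟨pp, hp6⟩
  have hci : i ≤ Nat.count P p := by
    by_contra h
    exact hpne _ (by omega) hpc.symm
  have h1 : Nat.nth P i ≤ Nat.nth P (Nat.count P p) :=
    (Nat.nth_le_nth hinf).mpr hci
  have hpM : p ≤ M := Nat.le_of_dvd (by omega) hpd
  omega
end
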